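/- arXiv:math/9905178 — 9 statements merged into one kernel-verified Lean document; each statement's English description precedes it below -/
import Mathlib

section
/- Let k be a commutative ring, A and B associative unital k-algebras, and Ψ : A⊗B → B⊗A a twisting map. Then the k-module B⊗A equipped with the multiplication μ_X = (μ_B⊗μ_A)∘(id_B⊗Ψ⊗id_A) and unit 1_B⊗1_A is an associative unital k-algebra X(B,A); moreover ι_B : b ↦ b⊗1_A and ι_A : a ↦ 1_B⊗a are k-algebra homomorphisms of B and A into X(B,A), and μ_X∘(ι_B⊗ι_A) = id_{B⊗A}. -/
/-!
STATEMENT 0: the twisted tensor product `X(B,A)` built from a twisting map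
`Ψ : A ⊗ B → B ⊗ A` is an associative unital `k`-algebra, the canonical maps
`ι_B : b ↦ b ⊗ 1` and `ι_A : a ↦ 1 ⊗ a` are algebra morphisms, and
`μ_X ∘ (ι_B ⊗ ι_A) = id`.
-/

open TensorProduct
set_option synthInstance.maxHeartbeats 1000000
set_option maxHeartbeats 1000000

section Defs

variable {k : Type*} [CommRing k]
variable {A B : Type*} [AddCommGroup A] [Module k A] [AddCommGroup B] [Module k B]

/-- `(id_B ⊗ μ) ∘ (ψ ⊗ id_A)` as a map `A ⊗ (B ⊗ A) → B ⊗ A`. -/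
noncomputable def twL (μ : A ⊗[k] A →ₗ[k] A) (ψ : A ⊗[k] B →ₗ[k] B ⊗[k] A) :
    A ⊗[k] (B ⊗[k] A) →ₗ[k] B ⊗[k] A :=
  LinearMap.lTensor B μ ∘ₗ (TensorProduct.assoc k B A A).toLinearMap
    ∘ₗ LinearMap.rTensor A ψ ∘ₗ (TensorProduct.assoc k A B A).symm.toLinearMap

/-- `(ν ⊗ id_A) ∘ (id_B ⊗ ψ)` as a map `(B ⊗ A) ⊗ B → B ⊗ A`. -/
noncomputable def twR (ν : B ⊗[k] B →ₗ[k] B) (ψ : A ⊗[k] B →ₗ[k] B ⊗[k] A) :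
    (B ⊗[k] A) ⊗[k] B →ₗ[k] B ⊗[k] A :=
  LinearMap.rTensor A ν ∘ₗ (TensorProduct.assoc k B B A).symm.toLinearMap
    ∘ₗ LinearMap.lTensor B ψ ∘ₗ (TensorProduct.assoc k B A B).toLinearMap

end Defs

section Ring

variable (k : Type*) [CommRing k]
variable {A B : Type*} [Ring A] [Algebra k A] [Ring B] [Algebra k B]

/-- The twisting-map conditions: `Ψ∘(μ_A⊗id_B) = (id_B⊗μ_A)∘(Ψ⊗id_A)∘(id_A⊗Ψ)`,
`Ψ∘(id_A⊗μ_B) = (μ_B⊗id_A)∘(id_B⊗Ψ)∘(Ψ⊗id_B)`, `Ψ(1⊗b) = b⊗1`, `Ψ(a⊗1) = 1⊗a`,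
expressed on pure tensors (equivalently, as equalities of linear maps). -/
def IsTwistingMap (ψ : A ⊗[k] B →ₗ[k] B ⊗[k] A) : Prop :=
  (∀ (a a' : A) (b : B), ψ ((a * a') ⊗ₜ[k] b)
      = twL (LinearMap.mul' k A) ψ (a ⊗ₜ[k] ψ (a' ⊗ₜ[k] b))) ∧
  (∀ (a : A) (b b' : B), ψ (a ⊗ₜ[k] (b * b'))
      = twR (LinearMap.mul' k B) ψ (ψ (a ⊗ₜ[k] b) ⊗ₜ[k] b')) ∧
  (∀ b : B, ψ ((1 : A) ⊗ₜ[k] b) = b ⊗ₜ[k] (1 : A)) ∧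
  (∀ a : A, ψ (a ⊗ₜ[k] (1 : B)) = (1 : B) ⊗ₜ[k] a)

/-- The multiplication `(ν ⊗ μ) ∘ (id_B ⊗ ψ ⊗ id_A)` on `B ⊗ A`. -/
noncomputable def mulXg (ν : B ⊗[k] B →ₗ[k] B) (μ : A ⊗[k] A →ₗ[k] A)
    (ψ : A ⊗[k] B →ₗ[k] B ⊗[k] A) :
    (B ⊗[k] A) ⊗[k] (B ⊗[k] A) →ₗ[k] B ⊗[k] A :=
  TensorProduct.map ν μ
    ∘ₗ (TensorProduct.assoc k B B (A ⊗[k] A)).symm.toLinearMap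
    ∘ₗ LinearMap.lTensor B (TensorProduct.assoc k B A A).toLinearMap
    ∘ₗ LinearMap.lTensor B (LinearMap.rTensor A ψ)
    ∘ₗ LinearMap.lTensor B (TensorProduct.assoc k A B A).symm.toLinearMap
    ∘ₗ (TensorProduct.assoc k B A (B ⊗[k] A)).toLinearMap

end Ring

section AuxLemmas
variable {k : Type*} [CommRing k]
variable {A B : Type*} [Ring A] [Algebra k A] [Ring B] [Algebra k B]
variable (ψ : A ⊗[k] B →ₗ[k] B ⊗[k] A)

lemma mulXg_tmul (b : B) (a : A) (b' : B) (a' : A) :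
    mulXg k (LinearMap.mul' k B) (LinearMap.mul' k A) ψ
      ((b ⊗ₜ[k] a) ⊗ₜ[k] (b' ⊗ₜ[k] a'))
    = TensorProduct.map (LinearMap.mulLeft k b) (LinearMap.mulRight k a')
        (ψ (a ⊗ₜ[k] b')) := by
  have aux : ∀ t : B ⊗[k] A,
      (TensorProduct.map (LinearMap.mul' k B) (LinearMap.mul' k A))
        ((TensorProduct.assoc k B B (A ⊗[k] A)).symm
          (b ⊗ₜ[k] (TensorProduct.assoc k B A A) (t ⊗ₜ[k] a')))
      = TensorProduct.map (LinearMap.mulLeft k b) (LinearMap.mulRight k a') t := by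
    intro t
    induction t using TensorProduct.induction_on with
    | zero => simp
    | tmul c d => simp [LinearMap.mul'_apply]
    | add u v hu hv => simp only [add_tmul, tmul_add, map_add, hu, hv]
  unfold mulXg
  simp only [LinearMap.coe_comp, Function.comp_apply, LinearEquiv.coe_coe,
    assoc_tmul, assoc_symm_tmul, LinearMap.lTensor_tmul, LinearMap.rTensor_tmul]
  exact aux (ψ (a ⊗ₜ[k] b'))

lemma twL_tmul (a : A) (c : B) (d : A) :
    twL (LinearMap.mul' k A) ψ (a ⊗ₜ[k] (c ⊗ₜ[k] d))
    = TensorProduct.map LinearMap.id (LinearMap.mulRight k d) (ψ (a ⊗ₜ[k] c)) := by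
  have aux : ∀ t : B ⊗[k] A,
      LinearMap.lTensor B (LinearMap.mul' k A)
        ((TensorProduct.assoc k B A A) (t ⊗ₜ[k] d))
      = TensorProduct.map LinearMap.id (LinearMap.mulRight k d) t := by
    intro t
    induction t using TensorProduct.induction_on with
    | zero => simp
    | tmul e f => simp [LinearMap.mul'_apply]
    | add u v hu hv => simp only [add_tmul, map_add, hu, hv]
  unfold twL
  simp only [LinearMap.coe_comp, Function.comp_apply, LinearEquiv.coe_coe,
    assoc_symm_tmul, LinearMap.rTensor_tmul]
  exact aux (ψ (a ⊗ₜ[k] c))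

lemma twR_tmul (c : B) (d : A) (b' : B) :
    twR (LinearMap.mul' k B) ψ ((c ⊗ₜ[k] d) ⊗ₜ[k] b')
    = TensorProduct.map (LinearMap.mulLeft k c) LinearMap.id (ψ (d ⊗ₜ[k] b')) := by
  have aux : ∀ t : B ⊗[k] A,
      LinearMap.rTensor A (LinearMap.mul' k B)
        ((TensorProduct.assoc k B B A).symm (c ⊗ₜ[k] t))
      = TensorProduct.map (LinearMap.mulLeft k c) LinearMap.id t := by
    intro t
    induction t using TensorProduct.induction_on with
    | zero => simp
    | tmul e f => simp [LinearMap.mul'_apply]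
    | add u v hu hv => simp only [tmul_add, map_add, hu, hv]
  unfold twR
  simp only [LinearMap.coe_comp, Function.comp_apply, LinearEquiv.coe_coe,
    assoc_tmul, LinearMap.lTensor_tmul]
  exact aux (ψ (d ⊗ₜ[k] b'))

end AuxLemmas

/-- Given a twisting map `ψ`, the (k-bilinear) multiplication
`μ_X = (μ_B ⊗ μ_A) ∘ (id_B ⊗ ψ ⊗ id_A)` on `B ⊗ A` is associative with unit
`1_B ⊗ 1_A`; the canonical inclusions `ι_B : b ↦ b ⊗ 1_A`, `ι_A : a ↦ 1_B ⊗ a`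
are (k-linear) multiplicative and unital, i.e. algebra maps into `X(B,A)`;
and `μ_X ∘ (ι_B ⊗ ι_A) = id_{B ⊗ A}`. -/
theorem twisted_tensor_product_is_algebra
    {k : Type*} [CommRing k] {A B : Type*} [Ring A] [Algebra k A] [Ring B] [Algebra k B]
    (ψ : A ⊗[k] B →ₗ[k] B ⊗[k] A) (hψ : IsTwistingMap k ψ) :
    letI μX := mulXg k (LinearMap.mul' k B) (LinearMap.mul' k A) ψ
    -- associativity
    (∀ x y z : B ⊗[k] A,
        μX (μX (x ⊗ₜ[k] y) ⊗ₜ[k] z) = μX (x ⊗ₜ[k] μX (y ⊗ₜ[k] z))) ∧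
    -- unit
    (∀ x : B ⊗[k] A, μX (((1 : B) ⊗ₜ[k] (1 : A)) ⊗ₜ[k] x) = x) ∧
    (∀ x : B ⊗[k] A, μX (x ⊗ₜ[k] ((1 : B) ⊗ₜ[k] (1 : A))) = x) ∧
    -- ι_B is an algebra morphism
    (∀ b b' : B, μX ((b ⊗ₜ[k] (1 : A)) ⊗ₜ[k] (b' ⊗ₜ[k] (1 : A)))
        = (b * b') ⊗ₜ[k] (1 : A)) ∧
    -- ι_A is an algebra morphism
    (∀ a a' : A, μX (((1 : B) ⊗ₜ[k] a) ⊗ₜ[k] ((1 : B) ⊗ₜ[k] a'))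
        = (1 : B) ⊗ₜ[k] (a * a')) ∧
    -- μ_X ∘ (ι_B ⊗ ι_A) = id
    (∀ (b : B) (a : A), μX ((b ⊗ₜ[k] (1 : A)) ⊗ₜ[k] ((1 : B) ⊗ₜ[k] a)) = b ⊗ₜ[k] a) := by
  obtain ⟨h1, h2, h3, h4⟩ := hψ
  set μX := mulXg k (LinearMap.mul' k B) (LinearMap.mul' k A) ψ with hμXdef
  have hμ : ∀ (b : B) (a : A) (b' : B) (a' : A),
      μX ((b ⊗ₜ[k] a) ⊗ₜ[k] (b' ⊗ₜ[k] a'))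
      = TensorProduct.map (LinearMap.mulLeft k b) (LinearMap.mulRight k a')
          (ψ (a ⊗ₜ[k] b')) := fun b a b' a' => mulXg_tmul ψ b a b' a'
  have G1 : ∀ (b c : B) (x : A) (u : B ⊗[k] A),
      TensorProduct.map (LinearMap.mulLeft k b) (LinearMap.mulRight k x)
        (TensorProduct.map (LinearMap.mulLeft k c) LinearMap.id u)
      = TensorProduct.map (LinearMap.mulLeft k (b*c)) (LinearMap.mulRight k x) u := by
    intro b c x u
    induction u using TensorProduct.induction_on with
    | zero => simp
    | tmul g h => simp [mul_assoc]
    | add u v hu hv => simp only [map_add, hu, hv]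
  have G2 : ∀ (y : B) (x f : A) (u : B ⊗[k] A),
      TensorProduct.map (LinearMap.mulLeft k y) (LinearMap.mulRight k x)
        (TensorProduct.map LinearMap.id (LinearMap.mulRight k f) u)
      = TensorProduct.map (LinearMap.mulLeft k y) (LinearMap.mulRight k (f*x)) u := by
    intro y x f u
    induction u using TensorProduct.induction_on with
    | zero => simp
    | tmul g h => simp [mul_assoc]
    | add u v hu hv => simp only [map_add, hu, hv]
  have hassoc : ∀ (b : B) (a : A) (b' : B) (a' : A) (b'' : B) (a'' : A),
      μX (μX ((b ⊗ₜ[k] a) ⊗ₜ[k] (b' ⊗ₜ[k] a')) ⊗ₜ[k] (b'' ⊗ₜ[k] a''))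
      = μX ((b ⊗ₜ[k] a) ⊗ₜ[k] μX ((b' ⊗ₜ[k] a') ⊗ₜ[k] (b'' ⊗ₜ[k] a''))) := by
    intro b a b' a' b'' a''
    have E2 : ∀ s : B ⊗[k] A,
        μX ((TensorProduct.map (LinearMap.mulLeft k b) (LinearMap.mulRight k a') s)
            ⊗ₜ[k] (b'' ⊗ₜ[k] a''))
        = μX ((TensorProduct.map (LinearMap.mulLeft k b) LinearMap.id s) ⊗ₜ[k]
            (TensorProduct.map LinearMap.id (LinearMap.mulRight k a'')
              (ψ (a' ⊗ₜ[k] b'')))) := by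
      intro s
      induction s using TensorProduct.induction_on with
      | zero => simp
      | add u v hu hv => simp only [map_add, add_tmul, hu, hv]
      | tmul c d =>
        simp only [TensorProduct.map_tmul, LinearMap.mulLeft_apply,
          LinearMap.mulRight_apply, LinearMap.id_coe, id_eq]
        rw [hμ, h1 d a' b'']
        have sub : ∀ t : B ⊗[k] A,
            TensorProduct.map (LinearMap.mulLeft k (b*c)) (LinearMap.mulRight k a'')
              (twL (LinearMap.mul' k A) ψ (d ⊗ₜ[k] t))
            = μX (((b*c) ⊗ₜ[k] d) ⊗ₜ[k]
                (TensorProduct.map LinearMap.id (LinearMap.mulRight k a'') t)) := by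
          intro t
          induction t using TensorProduct.induction_on with
          | zero => simp
          | add u v hu hv => simp only [tmul_add, map_add, hu, hv]
          | tmul e f =>
            rw [twL_tmul, G2]
            simp only [TensorProduct.map_tmul, LinearMap.mulRight_apply,
              LinearMap.id_coe, id_eq]
            rw [hμ]
        exact sub (ψ (a' ⊗ₜ[k] b''))
    have E1 : ∀ t : B ⊗[k] A,
        μX ((b ⊗ₜ[k] a) ⊗ₜ[k]
            (TensorProduct.map (LinearMap.mulLeft k b') (LinearMap.mulRight k a'') t))
        = μX ((TensorProduct.map (LinearMap.mulLeft k b) LinearMap.id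
              (ψ (a ⊗ₜ[k] b'))) ⊗ₜ[k]
            (TensorProduct.map LinearMap.id (LinearMap.mulRight k a'') t)) := by
      intro t
      induction t using TensorProduct.induction_on with
      | zero => simp
      | add u v hu hv => simp only [map_add, tmul_add, hu, hv]
      | tmul e f =>
        simp only [TensorProduct.map_tmul, LinearMap.mulLeft_apply,
          LinearMap.mulRight_apply, LinearMap.id_coe, id_eq]
        rw [hμ, h2 a b' e]
        have sub : ∀ s : B ⊗[k] A,
            TensorProduct.map (LinearMap.mulLeft k b) (LinearMap.mulRight k (f*a''))
              (twR (LinearMap.mul' k B) ψ (s ⊗ₜ[k] e))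
            = μX ((TensorProduct.map (LinearMap.mulLeft k b) LinearMap.id s) ⊗ₜ[k]
                (e ⊗ₜ[k] (f*a''))) := by
          intro s
          induction s using TensorProduct.induction_on with
          | zero => simp
          | add u v hu hv => simp only [add_tmul, map_add, hu, hv]
          | tmul c d =>
            rw [twR_tmul, G1]
            simp only [TensorProduct.map_tmul, LinearMap.mulLeft_apply,
              LinearMap.id_coe, id_eq]
            rw [hμ]
        exact sub (ψ (a ⊗ₜ[k] b'))
    rw [hμ b a b' a', hμ b' a' b'' a'', E2 (ψ (a ⊗ₜ[k] b')), E1 (ψ (a' ⊗ₜ[k] b''))]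
  refine ⟨?_, ?_, ?_, ?_, ?_, ?_⟩
  · intro x y z
    induction x using TensorProduct.induction_on with
    | zero => simp
    | add u v hu hv => simp only [add_tmul, map_add, hu, hv]
    | tmul b a =>
      induction y using TensorProduct.induction_on with
      | zero => simp
      | add u v hu hv => simp only [add_tmul, tmul_add, map_add, hu, hv]
      | tmul b' a' =>
        induction z using TensorProduct.induction_on with
        | zero => simp
        | add u v hu hv => simp only [add_tmul, tmul_add, map_add, hu, hv]
        | tmul b'' a'' => exact hassoc b a b' a' b'' a''
  · intro x
    induction x using TensorProduct.induction_on with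
    | zero => simp
    | add u v hu hv => simp only [tmul_add, map_add, hu, hv]
    | tmul b a => rw [hμ, h3]; simp
  · intro x
    induction x using TensorProduct.induction_on with
    | zero => simp
    | add u v hu hv => simp only [add_tmul, map_add, hu, hv]
    | tmul b a => rw [hμ, h4]; simp
  · intro b b'
    rw [hμ, h3]; simp
  · intro a a'
    rw [hμ, h4]; simp
  · intro b a
    rw [hμ, h3]; simp
end

section
/- Let k be a commutative ring, X an associative unital k-algebra, and let A, B be unital subalgebras of X with inclusion maps ι_A : A → X, ι_B : B → X, such that the k-linear map Φ = μ_X∘(ι_B⊗ι_A) : B⊗A → X is bijective. Then Ψ := Φ⁻¹∘μ_X∘(ι_A⊗ι_B) : A⊗B → B⊗A is a twisting map, and Φ is an isomorphism of k-algebras from the twisted tensor product X(B,A) built on this Ψ onto X. -/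
/-!
STATEMENT 1: if `X` factorises through subalgebras `B`, `A` (i.e. the
multiplication map `Φ : B ⊗ A → X` is bijective), then
`Ψ = Φ⁻¹ ∘ μ_X ∘ (ι_A ⊗ ι_B)` is a twisting map and `Φ` is an algebra
isomorphism from the twisted tensor product `X(B,A)` onto `X`.
-/

open TensorProduct

/-- The `k`-linear map `B ⊗ A → X`, `b ⊗ a ↦ b·a`, induced by multiplication
in `X` and the inclusions of the subalgebras `B` and `A`. -/
noncomputable def mulIncl {k X : Type*} [CommRing k] [Ring X] [Algebra k X]
    (B A : Subalgebra k X) : (↥B ⊗[k] ↥A) →ₗ[k] X :=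
  TensorProduct.lift ((LinearMap.mul k X).compl₁₂ B.val.toLinearMap A.val.toLinearMap)

set_option maxHeartbeats 1600000 in
/-- If the multiplication map `Φ : B ⊗ A → X` of a pair of
unital subalgebras `B, A ⊆ X` is bijective, then
`Ψ := Φ⁻¹ ∘ μ_X ∘ (ι_A ⊗ ι_B) : A ⊗ B → B ⊗ A` is a twisting map, and `Φ` is an
algebra isomorphism from the twisted tensor product `X(B,A)` built on `Ψ` onto `X`. -/
theorem factorisation_gives_twisting_map
    {k X : Type*} [CommRing k] [Ring X] [Algebra k X]
    (A B : Subalgebra k X)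
    (hΦ : Function.Bijective (mulIncl B A)) :
    letI Φ := mulIncl B A
    letI ψ : (↥A ⊗[k] ↥B) →ₗ[k] ↥B ⊗[k] ↥A :=
      (LinearEquiv.ofBijective Φ hΦ).symm.toLinearMap ∘ₗ
        TensorProduct.lift ((LinearMap.mul k X).compl₁₂ A.val.toLinearMap B.val.toLinearMap)
    -- Ψ is a twisting map
    IsTwistingMap k ψ ∧
    -- Φ is multiplicative from the twisted tensor product X(B,A) to X
    (∀ x y : ↥B ⊗[k] ↥A,
        Φ (mulXg k (LinearMap.mul' k ↥B) (LinearMap.mul' k ↥A) ψ (x ⊗ₜ[k] y))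
          = Φ x * Φ y) ∧
    -- Φ is unital
    Φ (((1 : ↥B) ⊗ₜ[k] (1 : ↥A))) = 1 := by
  set Φ := mulIncl B A with hΦdef
  set ψ : (↥A ⊗[k] ↥B) →ₗ[k] ↥B ⊗[k] ↥A :=
    (LinearEquiv.ofBijective Φ hΦ).symm.toLinearMap ∘ₗ
      TensorProduct.lift ((LinearMap.mul k X).compl₁₂ A.val.toLinearMap B.val.toLinearMap)
    with hψdef
  have hinj : Function.Injective Φ := hΦ.1
  have hΦt : ∀ (b : ↥B) (a : ↥A), Φ (b ⊗ₜ[k] a) = (b : X) * a := by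
    intro b a
    rw [hΦdef, mulIncl, TensorProduct.lift.tmul]
    rfl
  have hΦψ : ∀ (a : ↥A) (b : ↥B), Φ (ψ (a ⊗ₜ[k] b)) = (a : X) * b := by
    intro a b
    have : ψ (a ⊗ₜ[k] b) = (LinearEquiv.ofBijective Φ hΦ).symm
        (TensorProduct.lift ((LinearMap.mul k X).compl₁₂ A.val.toLinearMap B.val.toLinearMap)
          (a ⊗ₜ[k] b)) := rfl
    rw [this]
    have h2 : ∀ z, Φ ((LinearEquiv.ofBijective Φ hΦ).symm z) = z := fun z =>
      (LinearEquiv.ofBijective Φ hΦ).apply_symm_apply z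
    rw [h2, TensorProduct.lift.tmul]
    rfl
  have L0 : ∀ (w : ↥B ⊗[k] ↥A) (a'' : ↥A),
      Φ (LinearMap.lTensor ↥B (LinearMap.mul' k ↥A)
        ((TensorProduct.assoc k ↥B ↥A ↥A) (w ⊗ₜ[k] a''))) = Φ w * (a'' : X) := by
    intro w a''
    induction w using TensorProduct.induction_on with
    | zero =>
        rw [zero_tmul, LinearEquiv.map_zero, LinearMap.map_zero, LinearMap.map_zero, zero_mul]
    | tmul b a =>
        rw [TensorProduct.assoc_tmul, LinearMap.lTensor_tmul, LinearMap.mul'_apply, hΦt, hΦt,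
          MulMemClass.coe_mul, mul_assoc]
    | add x y hx hy =>
        rw [add_tmul, LinearEquiv.map_add, LinearMap.map_add, LinearMap.map_add,
          LinearMap.map_add, hx, hy, add_mul]
  have R0 : ∀ (b : ↥B) (w : ↥B ⊗[k] ↥A),
      Φ (LinearMap.rTensor ↥A (LinearMap.mul' k ↥B)
        ((TensorProduct.assoc k ↥B ↥B ↥A).symm (b ⊗ₜ[k] w))) = (b : X) * Φ w := by
    intro b w
    induction w using TensorProduct.induction_on with
    | zero =>
        rw [tmul_zero, LinearEquiv.map_zero, LinearMap.map_zero, LinearMap.map_zero, mul_zero]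
    | tmul b' a =>
        rw [TensorProduct.assoc_symm_tmul, LinearMap.rTensor_tmul, LinearMap.mul'_apply, hΦt, hΦt,
          MulMemClass.coe_mul, mul_assoc]
    | add x y hx hy =>
        rw [tmul_add, LinearEquiv.map_add, LinearMap.map_add, LinearMap.map_add,
          LinearMap.map_add, hx, hy, mul_add]
  have hL : ∀ (a : ↥A) (z : ↥B ⊗[k] ↥A),
      Φ (twL (LinearMap.mul' k ↥A) ψ (a ⊗ₜ[k] z)) = (a : X) * Φ z := by
    intro a z
    induction z using TensorProduct.induction_on with
    | zero =>
        simp only [tmul_zero, LinearMap.map_zero, mul_zero]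
    | tmul b a'' =>
        have : twL (LinearMap.mul' k ↥A) ψ (a ⊗ₜ[k] (b ⊗ₜ[k] a''))
            = LinearMap.lTensor ↥B (LinearMap.mul' k ↥A)
              ((TensorProduct.assoc k ↥B ↥A ↥A) ((ψ (a ⊗ₜ[k] b)) ⊗ₜ[k] a'')) := by
          rw [twL]
          simp only [LinearMap.coe_comp, LinearEquiv.coe_coe, Function.comp_apply]
          rw [TensorProduct.assoc_symm_tmul, LinearMap.rTensor_tmul]
        rw [this, L0, hΦψ, hΦt, mul_assoc]
    | add x y hx hy =>
        rw [tmul_add, LinearMap.map_add, LinearMap.map_add, LinearMap.map_add, hx, hy, mul_add]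
  have hR : ∀ (z : ↥B ⊗[k] ↥A) (b' : ↥B),
      Φ (twR (LinearMap.mul' k ↥B) ψ (z ⊗ₜ[k] b')) = Φ z * (b' : X) := by
    intro z b'
    induction z using TensorProduct.induction_on with
    | zero =>
        simp only [zero_tmul, LinearMap.map_zero, zero_mul]
    | tmul b a =>
        have : twR (LinearMap.mul' k ↥B) ψ ((b ⊗ₜ[k] a) ⊗ₜ[k] b')
            = LinearMap.rTensor ↥A (LinearMap.mul' k ↥B)
              ((TensorProduct.assoc k ↥B ↥B ↥A).symm (b ⊗ₜ[k] (ψ (a ⊗ₜ[k] b')))) := by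
          rw [twR]
          simp only [LinearMap.coe_comp, LinearEquiv.coe_coe, Function.comp_apply]
          rw [TensorProduct.assoc_tmul, LinearMap.lTensor_tmul]
        rw [this, R0, hΦψ, hΦt, ← mul_assoc]
    | add x y hx hy =>
        rw [add_tmul, LinearMap.map_add, LinearMap.map_add, LinearMap.map_add, hx, hy, add_mul]
  refine ⟨⟨?_, ?_, ?_, ?_⟩, ?_, ?_⟩
  · intro a a' b
    apply hinj
    rw [hΦψ, hL, hΦψ, MulMemClass.coe_mul, mul_assoc]
  · intro a b b'
    apply hinj
    rw [hΦψ, hR, hΦψ, MulMemClass.coe_mul, mul_assoc]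
  · intro b
    apply hinj
    rw [hΦψ, hΦt]
    simp
  · intro a
    apply hinj
    rw [hΦψ, hΦt]
    simp
  · have M0 : ∀ (b : ↥B) (w : ↥B ⊗[k] ↥A) (a' : ↥A),
        Φ (TensorProduct.map (LinearMap.mul' k ↥B) (LinearMap.mul' k ↥A)
          ((TensorProduct.assoc k ↥B ↥B (↥A ⊗[k] ↥A)).symm
            (b ⊗ₜ[k] ((TensorProduct.assoc k ↥B ↥A ↥A) (w ⊗ₜ[k] a')))))
          = (b : X) * Φ w * (a' : X) := by
      intro b w a'
      induction w using TensorProduct.induction_on with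
      | zero =>
          simp only [zero_tmul, LinearEquiv.map_zero, tmul_zero, LinearMap.map_zero,
            zero_mul, mul_zero]
      | tmul bi ai =>
          rw [TensorProduct.assoc_tmul, TensorProduct.assoc_symm_tmul, TensorProduct.map_tmul,
            LinearMap.mul'_apply, LinearMap.mul'_apply, hΦt, hΦt, MulMemClass.coe_mul,
            MulMemClass.coe_mul]
          rw [mul_assoc, mul_assoc, mul_assoc]
      | add x y hx hy =>
          simp only [add_tmul, LinearEquiv.map_add, tmul_add, LinearMap.map_add, hx, hy,
            add_mul, mul_add]
    intro x y
    induction x using TensorProduct.induction_on with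
    | zero =>
        simp only [zero_tmul, LinearMap.map_zero, zero_mul]
    | tmul b a =>
        induction y using TensorProduct.induction_on with
        | zero =>
            simp only [tmul_zero, LinearMap.map_zero, mul_zero]
        | tmul b' a' =>
            have : mulXg k (LinearMap.mul' k ↥B) (LinearMap.mul' k ↥A) ψ
                ((b ⊗ₜ[k] a) ⊗ₜ[k] (b' ⊗ₜ[k] a'))
                = TensorProduct.map (LinearMap.mul' k ↥B) (LinearMap.mul' k ↥A)
                  ((TensorProduct.assoc k ↥B ↥B (↥A ⊗[k] ↥A)).symm
                    (b ⊗ₜ[k] ((TensorProduct.assoc k ↥B ↥A ↥A)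
                      ((ψ (a ⊗ₜ[k] b')) ⊗ₜ[k] a')))) := by
              rw [mulXg]
              simp only [LinearMap.coe_comp, LinearEquiv.coe_coe, Function.comp_apply,
                TensorProduct.assoc_tmul, TensorProduct.assoc_symm_tmul,
                LinearMap.lTensor_tmul, LinearMap.rTensor_tmul]
            rw [this, M0, hΦψ, hΦt, hΦt, mul_assoc, mul_assoc, mul_assoc]
        | add y1 y2 h1 h2 =>
            rw [tmul_add, LinearMap.map_add, LinearMap.map_add, LinearMap.map_add, h1, h2,
              mul_add]
    | add x1 x2 h1 h2 =>
        rw [add_tmul, LinearMap.map_add, LinearMap.map_add, LinearMap.map_add, h1, h2, add_mul]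
  · rw [hΦt, OneMemClass.coe_one, OneMemClass.coe_one, one_mul]
end

section
/- Let Ψ : A⊗B → B⊗A be a twisting map and let μ_A^{(1)} : A⊗A → A, Ψ^{(1)} : A⊗B → B⊗A be k-linear maps satisfying (id_B⊗μ_A)∘(Ψ^{(1)}⊗id_A)∘(id_A⊗Ψ) + (id_B⊗μ_A)∘(Ψ⊗id_A)∘(id_A⊗Ψ^{(1)}) + (id_B⊗μ_A^{(1)})∘(Ψ⊗id_A)∘(id_A⊗Ψ) = Ψ^{(1)}∘(μ_A⊗id_B) + Ψ∘(μ_A^{(1)}⊗id_B). Then for every b ∈ B: Ψ^{(1)}(1_A⊗b) = Ψ(μ_A^{(1)}(1_A⊗1_A)⊗b) − b⊗μ_A^{(1)}(1_A⊗1_A). Consequently, setting 1_{A_ε} := 1_A − ε·μ_A^{(1)}(1_A⊗1_A) ∈ A[ε], one has Ψ_ε(1_{A_ε}⊗b) = b⊗1_{A_ε} for all b ∈ B. -/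
/-!
STATEMENT 4: if the first-order cocycle condition (E3) holds, then
`Ψ⁽¹⁾(1_A ⊗ b) = Ψ(μ_A⁽¹⁾(1⊗1) ⊗ b) − b ⊗ μ_A⁽¹⁾(1⊗1)`, and consequently,
with `1_{A_ε} = 1_A − ε·μ_A⁽¹⁾(1⊗1)`, one has `Ψ_ε(1_{A_ε} ⊗ b) = b ⊗ 1_{A_ε}`.
The dual-number identity is expressed in the standard model `M[ε] = M × M`
(with `ε` acting as `(x, y) ↦ (0, x)`) as an equality of pairs.
-/

open TensorProduct

section Helpers

variable {k : Type*} [CommRing k]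
variable {A B : Type*} [Ring A] [Algebra k A] [Ring B] [Algebra k B]

lemma twL_one_pure (μ : A ⊗[k] A →ₗ[k] A) (ψ : A ⊗[k] B →ₗ[k] B ⊗[k] A) (b : B) :
    twL μ ψ ((1 : A) ⊗ₜ[k] (b ⊗ₜ[k] (1 : A)))
      = LinearMap.lTensor B μ ((TensorProduct.assoc k B A A)
          (ψ ((1 : A) ⊗ₜ[k] b) ⊗ₜ[k] (1 : A))) := by
  simp [twL]

lemma lTensor_mul_one (y : B ⊗[k] A) :
    LinearMap.lTensor B (LinearMap.mul' k A)
      ((TensorProduct.assoc k B A A) (y ⊗ₜ[k] (1 : A))) = y := by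
  induction y using TensorProduct.induction_on with
  | zero => rw [zero_tmul, LinearEquiv.map_zero, LinearMap.map_zero]
  | tmul b a => simp [LinearMap.mul'_apply]
  | add x y hx hy => rw [add_tmul, LinearEquiv.map_add, LinearMap.map_add, hx, hy]

lemma twL_mul_unit (ψ : A ⊗[k] B →ₗ[k] B ⊗[k] A)
    (hψ1 : ∀ b : B, ψ ((1 : A) ⊗ₜ[k] b) = b ⊗ₜ[k] (1 : A)) (x : B ⊗[k] A) :
    twL (LinearMap.mul' k A) ψ ((1 : A) ⊗ₜ[k] x) = x := by
  induction x using TensorProduct.induction_on with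
  | zero => simp
  | tmul b a => simp [twL, hψ1, LinearMap.mul'_apply]
  | add x y hx hy => simp only [tmul_add, map_add, hx, hy]

end Helpers

theorem deformed_twist_unit_condition
    {k : Type*} [CommRing k] {A B : Type*} [Ring A] [Algebra k A] [Ring B] [Algebra k B]
    (ψ : A ⊗[k] B →ₗ[k] B ⊗[k] A) (hψ : IsTwistingMap k ψ)
    (μ₁ : A ⊗[k] A →ₗ[k] A) (ψ₁ : A ⊗[k] B →ₗ[k] B ⊗[k] A)
    -- (E3)
    (hE3 : ∀ (a a' : A) (b : B),
      twL (LinearMap.mul' k A) ψ₁ (a ⊗ₜ[k] ψ (a' ⊗ₜ[k] b))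
        + twL (LinearMap.mul' k A) ψ (a ⊗ₜ[k] ψ₁ (a' ⊗ₜ[k] b))
        + twL μ₁ ψ (a ⊗ₜ[k] ψ (a' ⊗ₜ[k] b))
      = ψ₁ ((a * a') ⊗ₜ[k] b) + ψ (μ₁ (a ⊗ₜ[k] a') ⊗ₜ[k] b)) :
    letI u := μ₁ ((1 : A) ⊗ₜ[k] (1 : A))
    -- Ψ⁽¹⁾(1_A ⊗ b) = Ψ(μ_A⁽¹⁾(1⊗1) ⊗ b) − b ⊗ μ_A⁽¹⁾(1⊗1)
    (∀ b : B, ψ₁ ((1 : A) ⊗ₜ[k] b) = ψ (u ⊗ₜ[k] b) - b ⊗ₜ[k] u) ∧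
    -- Ψ_ε(1_{A_ε} ⊗ b) = b ⊗ 1_{A_ε}, where 1_{A_ε} = 1_A − ε·μ_A⁽¹⁾(1⊗1);
    -- both sides written as pairs (zeroth-order, first-order component).
    (∀ b : B,
      ((ψ ((1 : A) ⊗ₜ[k] b), ψ₁ ((1 : A) ⊗ₜ[k] b) - ψ (u ⊗ₜ[k] b))
          : (B ⊗[k] A) × (B ⊗[k] A))
        = (b ⊗ₜ[k] (1 : A), -(b ⊗ₜ[k] u))) := by
  set u := μ₁ ((1 : A) ⊗ₜ[k] (1 : A)) with hu
  obtain ⟨h1, h2, h3, h4⟩ := hψ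
  have key : ∀ b : B, ψ₁ ((1 : A) ⊗ₜ[k] b) = ψ (u ⊗ₜ[k] b) - b ⊗ₜ[k] u := by
    intro b
    have hE := hE3 1 1 b
    rw [h3 b] at hE
    -- term1
    have t1 : twL (LinearMap.mul' k A) ψ₁ ((1 : A) ⊗ₜ[k] (b ⊗ₜ[k] (1 : A)))
        = ψ₁ ((1 : A) ⊗ₜ[k] b) := by
      rw [show twL (LinearMap.mul' k A) ψ₁ ((1 : A) ⊗ₜ[k] (b ⊗ₜ[k] (1 : A)))
          = LinearMap.lTensor B (LinearMap.mul' k A) ((TensorProduct.assoc k B A A)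
              (ψ₁ ((1 : A) ⊗ₜ[k] b) ⊗ₜ[k] (1 : A))) by simp [twL]]
      exact lTensor_mul_one _
    have t2 : twL (LinearMap.mul' k A) ψ ((1 : A) ⊗ₜ[k] ψ₁ ((1 : A) ⊗ₜ[k] b))
        = ψ₁ ((1 : A) ⊗ₜ[k] b) := twL_mul_unit ψ h3 _
    have t3 : twL μ₁ ψ ((1 : A) ⊗ₜ[k] (b ⊗ₜ[k] (1 : A))) = b ⊗ₜ[k] u := by
      simp [twL, h3, hu]
    rw [t1, t2, t3, one_mul] at hE
    have := hE
    abel_nf at this ⊢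
    linear_combination (norm := abel) this
  refine ⟨key, fun b => ?_⟩
  rw [Prod.mk.injEq]
  constructor
  · exact h3 b
  · rw [key b]; abel
end

section
/- (Theorem 3.1, equivalence part.) Let Ψ be a twisting map and let (μ_A^{(1)}, Ψ^{(1)}, μ_B^{(1)}) and (μ̃_A^{(1)}, Ψ̃^{(1)}, μ̃_B^{(1)}) be two triples of k-linear maps, each satisfying the 2-cocycle conditions (E1)–(E4). Let α : A → A and β : B → B be k-linear maps such that μ_A^{(1)}(a⊗a') − μ̃_A^{(1)}(a⊗a') = a·α(a') − α(a·a') + α(a)·a' and μ_B^{(1)}(b⊗b') − μ̃_B^{(1)}(b⊗b') = b·β(b') − β(b·b') + β(b)·b' for all a,a' ∈ A and b,b' ∈ B. Then the k[ε]-linear map φ_ε := (id_B + εβ)⊗(id_A + εα) : X_ε → X̃_ε is multiplicative (φ_ε(x·y) = φ_ε(x)·φ_ε(y) for all x,y) if and only if Ψ^{(1)} − Ψ̃^{(1)} = Ψ∘(id_A⊗β) − (β⊗id_A)∘Ψ + Ψ∘(α⊗id_B) − (id_B⊗α)∘Ψ. -/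
set_option synthInstance.maxHeartbeats 1000000
set_option maxHeartbeats 2000000
set_option linter.unusedVariables false


/-!
STATEMENT 6 (Theorem 3.1, equivalence part): given two infinitesimal
deformations of `X(B,A)` (two 2-cocycles) and maps `α, β` realising the
Hochschild equivalences on `A` and `B`, the `k[ε]`-linear map
`φ_ε = (id_B + εβ) ⊗ (id_A + εα) : X_ε → X̃_ε` is multiplicative iff
`Ψ⁽¹⁾ − Ψ̃⁽¹⁾ = Ψ∘(id⊗β) − (β⊗id)∘Ψ + Ψ∘(α⊗id) − (id⊗α)∘Ψ`.
Dual numbers are modelled by `M[ε] = M × M` with `ε` acting as `(x,y) ↦ (0,x)`.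
-/

open TensorProduct

section EpsStuff

variable {k : Type*} [CommRing k] {X : Type*} [AddCommGroup X] [Module k X]

/-- The multiplication on `X[ε] = X × X` whose zeroth- and first-order parts
are the bilinear maps `m₀` and `m₁`. -/
noncomputable def mulE (m₀ m₁ : X ⊗[k] X →ₗ[k] X) (x y : X × X) : X × X :=
  (m₀ (x.1 ⊗ₜ[k] y.1), m₀ (x.1 ⊗ₜ[k] y.2) + m₀ (x.2 ⊗ₜ[k] y.1) + m₁ (x.1 ⊗ₜ[k] y.1))

/-- The `k[ε]`-linear map `id + ε·D` on `X[ε] = X × X`. -/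
noncomputable def epsMap (D : X →ₗ[k] X) (x : X × X) : X × X :=
  (x.1, x.2 + D x.1)

end EpsStuff

section Sand

variable (k : Type*) [CommRing k]
variable {A B : Type*} [Ring A] [Algebra k A] [Ring B] [Algebra k B]

/-- Auxiliary "sandwich" map `c ⊗ d ↦ ν(b ⊗ c) ⊗ μ(d ⊗ a')`. -/
noncomputable def sand (ν : B ⊗[k] B →ₗ[k] B) (μ : A ⊗[k] A →ₗ[k] A) (b : B) (a' : A) :
    B ⊗[k] A →ₗ[k] B ⊗[k] A :=
  TensorProduct.map (ν ∘ₗ TensorProduct.mk k B B b) (μ ∘ₗ (TensorProduct.mk k A A).flip a')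

@[simp] lemma sand_tmul (ν : B ⊗[k] B →ₗ[k] B) (μ : A ⊗[k] A →ₗ[k] A) (b : B) (a' : A)
    (c : B) (d : A) :
    sand k ν μ b a' (c ⊗ₜ[k] d) = ν (b ⊗ₜ[k] c) ⊗ₜ[k] μ (d ⊗ₜ[k] a') := rfl

lemma mulXg_apply (ν : B ⊗[k] B →ₗ[k] B) (μ : A ⊗[k] A →ₗ[k] A)
    (ψ : A ⊗[k] B →ₗ[k] B ⊗[k] A) (b : B) (a : A) (b' : B) (a' : A) :
    mulXg k ν μ ψ ((b ⊗ₜ[k] a) ⊗ₜ[k] (b' ⊗ₜ[k] a')) = sand k ν μ b a' (ψ (a ⊗ₜ[k] b')) := by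
  unfold mulXg
  simp only [LinearMap.coe_comp, Function.comp_apply, LinearEquiv.coe_coe,
    assoc_tmul, assoc_symm_tmul, LinearMap.lTensor_tmul, LinearMap.rTensor_tmul]
  induction ψ (a ⊗ₜ[k] b') using TensorProduct.induction_on with
  | zero => simp
  | tmul c d => simp
  | add x y hx hy =>
    simp only [map_add, add_tmul, tmul_add, LinearMap.lTensor_tmul] at hx hy ⊢
    rw [hx, hy]

lemma sand_one : sand k (LinearMap.mul' k B) (LinearMap.mul' k A) (1 : B) (1 : A)
    = (LinearMap.id : B ⊗[k] A →ₗ[k] B ⊗[k] A) := by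
  apply TensorProduct.ext'
  intro c d
  simp [sand_tmul]

end Sand

/-- Theorem 3.1 of the paper, equivalence part. -/
theorem equivalence_of_infinitesimal_deformations
    {k : Type*} [CommRing k] {A B : Type*} [Ring A] [Algebra k A] [Ring B] [Algebra k B]
    (ψ : A ⊗[k] B →ₗ[k] B ⊗[k] A) (hψ : IsTwistingMap k ψ)
    (μ₁ μ₁' : A ⊗[k] A →ₗ[k] A) (ψ₁ ψ₁' : A ⊗[k] B →ₗ[k] B ⊗[k] A)
    (ν₁ ν₁' : B ⊗[k] B →ₗ[k] B)
    -- both triples satisfy the 2-cocycle conditions (E1)–(E4)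
    (hE1 : ∀ a b c : A,
      a * μ₁ (b ⊗ₜ[k] c) - μ₁ ((a * b) ⊗ₜ[k] c)
        + μ₁ (a ⊗ₜ[k] (b * c)) - μ₁ (a ⊗ₜ[k] b) * c = 0)
    (hE1' : ∀ a b c : A,
      a * μ₁' (b ⊗ₜ[k] c) - μ₁' ((a * b) ⊗ₜ[k] c)
        + μ₁' (a ⊗ₜ[k] (b * c)) - μ₁' (a ⊗ₜ[k] b) * c = 0)
    (hE2 : ∀ a b c : B,
      a * ν₁ (b ⊗ₜ[k] c) - ν₁ ((a * b) ⊗ₜ[k] c)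
        + ν₁ (a ⊗ₜ[k] (b * c)) - ν₁ (a ⊗ₜ[k] b) * c = 0)
    (hE2' : ∀ a b c : B,
      a * ν₁' (b ⊗ₜ[k] c) - ν₁' ((a * b) ⊗ₜ[k] c)
        + ν₁' (a ⊗ₜ[k] (b * c)) - ν₁' (a ⊗ₜ[k] b) * c = 0)
    (hE3 : ∀ (a a' : A) (b : B),
      twL (LinearMap.mul' k A) ψ₁ (a ⊗ₜ[k] ψ (a' ⊗ₜ[k] b))
        + twL (LinearMap.mul' k A) ψ (a ⊗ₜ[k] ψ₁ (a' ⊗ₜ[k] b))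
        + twL μ₁ ψ (a ⊗ₜ[k] ψ (a' ⊗ₜ[k] b))
      = ψ₁ ((a * a') ⊗ₜ[k] b) + ψ (μ₁ (a ⊗ₜ[k] a') ⊗ₜ[k] b))
    (hE3' : ∀ (a a' : A) (b : B),
      twL (LinearMap.mul' k A) ψ₁' (a ⊗ₜ[k] ψ (a' ⊗ₜ[k] b))
        + twL (LinearMap.mul' k A) ψ (a ⊗ₜ[k] ψ₁' (a' ⊗ₜ[k] b))
        + twL μ₁' ψ (a ⊗ₜ[k] ψ (a' ⊗ₜ[k] b))
      = ψ₁' ((a * a') ⊗ₜ[k] b) + ψ (μ₁' (a ⊗ₜ[k] a') ⊗ₜ[k] b))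
    (hE4 : ∀ (a : A) (b b' : B),
      twR (LinearMap.mul' k B) ψ₁ (ψ (a ⊗ₜ[k] b) ⊗ₜ[k] b')
        + twR (LinearMap.mul' k B) ψ (ψ₁ (a ⊗ₜ[k] b) ⊗ₜ[k] b')
        + twR ν₁ ψ (ψ (a ⊗ₜ[k] b) ⊗ₜ[k] b')
      = ψ₁ (a ⊗ₜ[k] (b * b')) + ψ (a ⊗ₜ[k] ν₁ (b ⊗ₜ[k] b')))
    (hE4' : ∀ (a : A) (b b' : B),
      twR (LinearMap.mul' k B) ψ₁' (ψ (a ⊗ₜ[k] b) ⊗ₜ[k] b')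
        + twR (LinearMap.mul' k B) ψ (ψ₁' (a ⊗ₜ[k] b) ⊗ₜ[k] b')
        + twR ν₁' ψ (ψ (a ⊗ₜ[k] b) ⊗ₜ[k] b')
      = ψ₁' (a ⊗ₜ[k] (b * b')) + ψ (a ⊗ₜ[k] ν₁' (b ⊗ₜ[k] b')))
    -- α and β realise the Hochschild equivalences
    (α : A →ₗ[k] A) (β : B →ₗ[k] B)
    (hα : ∀ a a' : A,
      μ₁ (a ⊗ₜ[k] a') - μ₁' (a ⊗ₜ[k] a') = a * α a' - α (a * a') + α a * a')
    (hβ : ∀ b b' : B,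
      ν₁ (b ⊗ₜ[k] b') - ν₁' (b ⊗ₜ[k] b') = b * β b' - β (b * b') + β b * b') :
    letI M := LinearMap.mul' k A
    letI N := LinearMap.mul' k B
    letI mX : (B ⊗[k] A) ⊗[k] (B ⊗[k] A) →ₗ[k] B ⊗[k] A := mulXg k N M ψ
    letI mX1 : (B ⊗[k] A) ⊗[k] (B ⊗[k] A) →ₗ[k] B ⊗[k] A :=
      mulXg k N M ψ₁ + mulXg k N μ₁ ψ + mulXg k ν₁ M ψ
    letI mX1' : (B ⊗[k] A) ⊗[k] (B ⊗[k] A) →ₗ[k] B ⊗[k] A :=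
      mulXg k N M ψ₁' + mulXg k N μ₁' ψ + mulXg k ν₁' M ψ
    letI Dφ : B ⊗[k] A →ₗ[k] B ⊗[k] A :=
      TensorProduct.map β LinearMap.id + TensorProduct.map LinearMap.id α
    -- φ_ε = (id_B + εβ) ⊗ (id_A + εα) is multiplicative
    (∀ x y : (B ⊗[k] A) × (B ⊗[k] A),
        epsMap Dφ (mulE mX mX1 x y) = mulE mX mX1' (epsMap Dφ x) (epsMap Dφ y))
    ↔
    -- Ψ⁽¹⁾ − Ψ̃⁽¹⁾ = Ψ∘(id⊗β) − (β⊗id)∘Ψ + Ψ∘(α⊗id) − (id⊗α)∘Ψ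
    (∀ (a : A) (b : B),
        ψ₁ (a ⊗ₜ[k] b) - ψ₁' (a ⊗ₜ[k] b)
          = ψ (a ⊗ₜ[k] β b) - (TensorProduct.map β LinearMap.id) (ψ (a ⊗ₜ[k] b))
            + ψ (α a ⊗ₜ[k] b) - (TensorProduct.map LinearMap.id α) (ψ (a ⊗ₜ[k] b))) := by
  set M := LinearMap.mul' k A with hM
  set N := LinearMap.mul' k B with hN
  set mX : (B ⊗[k] A) ⊗[k] (B ⊗[k] A) →ₗ[k] B ⊗[k] A := mulXg k N M ψ with hmXdef
  set mX1 : (B ⊗[k] A) ⊗[k] (B ⊗[k] A) →ₗ[k] B ⊗[k] A :=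
      mulXg k N M ψ₁ + mulXg k N μ₁ ψ + mulXg k ν₁ M ψ with hmX1def
  set mX1' : (B ⊗[k] A) ⊗[k] (B ⊗[k] A) →ₗ[k] B ⊗[k] A :=
      mulXg k N M ψ₁' + mulXg k N μ₁' ψ + mulXg k ν₁' M ψ with hmX1'def
  set Dφ : B ⊗[k] A →ₗ[k] B ⊗[k] A :=
      TensorProduct.map β LinearMap.id + TensorProduct.map LinearMap.id α with hDφdef
  -- basic pointwise facts
  have hDt : ∀ (x : B) (y : A), Dφ (x ⊗ₜ[k] y) = β x ⊗ₜ[k] y + x ⊗ₜ[k] α y := by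
    intro x y
    rw [hDφdef]
    simp
  have hDadd : ∀ t : B ⊗[k] A,
      Dφ t = TensorProduct.map β LinearMap.id t + TensorProduct.map LinearMap.id α t := by
    intro t
    rw [hDφdef]
    simp
  have hmXp : ∀ (b : B) (a : A) (b' : B) (a' : A),
      mX ((b ⊗ₜ[k] a) ⊗ₜ[k] (b' ⊗ₜ[k] a')) = sand k N M b a' (ψ (a ⊗ₜ[k] b')) := by
    intro b a b' a'
    rw [hmXdef]
    exact mulXg_apply k N M ψ b a b' a'
  have hmX1p : ∀ (b : B) (a : A) (b' : B) (a' : A),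
      mX1 ((b ⊗ₜ[k] a) ⊗ₜ[k] (b' ⊗ₜ[k] a'))
        = sand k N M b a' (ψ₁ (a ⊗ₜ[k] b')) + sand k N μ₁ b a' (ψ (a ⊗ₜ[k] b'))
          + sand k ν₁ M b a' (ψ (a ⊗ₜ[k] b')) := by
    intro b a b' a'
    rw [hmX1def]
    simp only [LinearMap.add_apply, mulXg_apply]
  have hmX1'p : ∀ (b : B) (a : A) (b' : B) (a' : A),
      mX1' ((b ⊗ₜ[k] a) ⊗ₜ[k] (b' ⊗ₜ[k] a'))
        = sand k N M b a' (ψ₁' (a ⊗ₜ[k] b')) + sand k N μ₁' b a' (ψ (a ⊗ₜ[k] b'))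
          + sand k ν₁' M b a' (ψ (a ⊗ₜ[k] b')) := by
    intro b a b' a'
    rw [hmX1'def]
    simp only [LinearMap.add_apply, mulXg_apply]
  -- Step 1 : multiplicativity ↔ pointwise condition on B ⊗ A
  have step1 : (∀ x y : (B ⊗[k] A) × (B ⊗[k] A),
        epsMap Dφ (mulE mX mX1 x y) = mulE mX mX1' (epsMap Dφ x) (epsMap Dφ y))
      ↔ (∀ u v : B ⊗[k] A, mX1 (u ⊗ₜ[k] v) + Dφ (mX (u ⊗ₜ[k] v))
          = mX (u ⊗ₜ[k] Dφ v) + mX (Dφ u ⊗ₜ[k] v) + mX1' (u ⊗ₜ[k] v)) := by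
    constructor
    · intro h u v
      have h2 := congrArg Prod.snd (h (u, 0) (v, 0))
      simpa [mulE, epsMap, tmul_zero, zero_tmul] using h2
    · intro h x y
      simp only [mulE, epsMap, Prod.mk.injEq]
      refine ⟨trivial, ?_⟩
      have h0 := h x.1 y.1
      have expand : mX (x.1 ⊗ₜ[k] (y.2 + Dφ y.1)) + mX ((x.2 + Dφ x.1) ⊗ₜ[k] y.1)
            + mX1' (x.1 ⊗ₜ[k] y.1)
          = mX (x.1 ⊗ₜ[k] y.2) + mX (x.1 ⊗ₜ[k] Dφ y.1) + mX (x.2 ⊗ₜ[k] y.1)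
            + mX (Dφ x.1 ⊗ₜ[k] y.1) + mX1' (x.1 ⊗ₜ[k] y.1) := by
        rw [tmul_add, add_tmul, map_add, map_add]
        abel
      linear_combination (norm := abel1) h0 - expand
  -- Step 2 : pointwise condition ↔ condition on pure tensors
  have step2 : (∀ u v : B ⊗[k] A, mX1 (u ⊗ₜ[k] v) + Dφ (mX (u ⊗ₜ[k] v))
          = mX (u ⊗ₜ[k] Dφ v) + mX (Dφ u ⊗ₜ[k] v) + mX1' (u ⊗ₜ[k] v))
      ↔ (∀ (b : B) (a : A) (b' : B) (a' : A),
          mX1 ((b ⊗ₜ[k] a) ⊗ₜ[k] (b' ⊗ₜ[k] a'))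
            + Dφ (mX ((b ⊗ₜ[k] a) ⊗ₜ[k] (b' ⊗ₜ[k] a')))
          = mX ((b ⊗ₜ[k] a) ⊗ₜ[k] Dφ (b' ⊗ₜ[k] a'))
            + mX (Dφ (b ⊗ₜ[k] a) ⊗ₜ[k] (b' ⊗ₜ[k] a'))
            + mX1' ((b ⊗ₜ[k] a) ⊗ₜ[k] (b' ⊗ₜ[k] a'))) := by
    constructor
    · intro h b a b' a'
      exact h _ _
    · intro h u v
      have heq : (mX1 + Dφ ∘ₗ mX : (B ⊗[k] A) ⊗[k] (B ⊗[k] A) →ₗ[k] B ⊗[k] A)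
          = mX ∘ₗ LinearMap.lTensor (B ⊗[k] A) Dφ + mX ∘ₗ LinearMap.rTensor (B ⊗[k] A) Dφ
            + mX1' := by
        apply TensorProduct.ext_fourfold'
        intro b a b' a'
        simpa only [LinearMap.add_apply, LinearMap.comp_apply, LinearMap.lTensor_tmul,
          LinearMap.rTensor_tmul] using h b a b' a'
      have h2 := LinearMap.congr_fun heq (u ⊗ₜ[k] v)
      simpa only [LinearMap.add_apply, LinearMap.comp_apply, LinearMap.lTensor_tmul,
        LinearMap.rTensor_tmul] using h2
  -- The key linear identity coming from hα and hβ
  have hH : ∀ (b : B) (a' : A) (t : B ⊗[k] A),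
      sand k N μ₁ b a' t + sand k ν₁ M b a' t + Dφ (sand k N M b a' t)
      = sand k N M b (α a') t + sand k N M (β b) a' t + sand k N μ₁' b a' t
        + sand k ν₁' M b a' t + sand k N M b a' (Dφ t) := by
    intro b a' t
    induction t using TensorProduct.induction_on with
    | zero => simp
    | tmul c d =>
      rw [hDt c d]
      simp only [sand_tmul, map_add, hDt, hM, hN, LinearMap.mul'_apply]
      have h1 := congrArg (fun z : A => (b * c : B) ⊗ₜ[k] z) (hα d a')
      have h2 := congrArg (fun z : B => z ⊗ₜ[k] (d * a' : A)) (hβ b c)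
      simp only [tmul_sub, tmul_add, sub_tmul, add_tmul] at h1 h2
      linear_combination (norm := abel1) h1 + h2
    | add x y hx hy =>
      simp only [map_add]
      linear_combination (norm := abel1) hx + hy
  -- Step 3 : the pure-tensor condition, rewritten through `sand`
  have hmain : ∀ (b : B) (a : A) (b' : B) (a' : A),
      (mX1 ((b ⊗ₜ[k] a) ⊗ₜ[k] (b' ⊗ₜ[k] a'))
            + Dφ (mX ((b ⊗ₜ[k] a) ⊗ₜ[k] (b' ⊗ₜ[k] a')))
          = mX ((b ⊗ₜ[k] a) ⊗ₜ[k] Dφ (b' ⊗ₜ[k] a'))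
            + mX (Dφ (b ⊗ₜ[k] a) ⊗ₜ[k] (b' ⊗ₜ[k] a'))
            + mX1' ((b ⊗ₜ[k] a) ⊗ₜ[k] (b' ⊗ₜ[k] a')))
      ↔ sand k N M b a' (ψ₁ (a ⊗ₜ[k] b') + Dφ (ψ (a ⊗ₜ[k] b')))
        = sand k N M b a' (ψ (a ⊗ₜ[k] β b') + ψ (α a ⊗ₜ[k] b') + ψ₁' (a ⊗ₜ[k] b')) := by
    intro b a b' a'
    rw [hDt b' a', hDt b a]
    rw [tmul_add, add_tmul, map_add, map_add]
    rw [hmX1p, hmX1'p, hmXp, hmXp, hmXp, hmXp, hmXp]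
    rw [map_add, map_add, map_add]
    have hh := hH b a' (ψ (a ⊗ₜ[k] b'))
    constructor
    · intro h
      linear_combination (norm := abel1) h - hh
    · intro h
      linear_combination (norm := abel1) h + hh
  -- put everything together
  rw [step1, step2]
  constructor
  · intro h a b'
    have h2 := (hmain 1 a b' 1).mp (h 1 a b' 1)
    rw [hM, hN, sand_one, LinearMap.id_coe, id_eq, id_eq] at h2
    have hD := hDadd (ψ (a ⊗ₜ[k] b'))
    linear_combination (norm := abel1) h2 - hD
  · intro h b a b' a'
    refine (hmain b a b' a').mpr ?_
    have hT := h a b'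
    have hD := hDadd (ψ (a ⊗ₜ[k] b'))
    have hXY : ψ₁ (a ⊗ₜ[k] b') + Dφ (ψ (a ⊗ₜ[k] b'))
        = ψ (a ⊗ₜ[k] β b') + ψ (α a ⊗ₜ[k] b') + ψ₁' (a ⊗ₜ[k] b') := by
      linear_combination (norm := abel1) hT + hD
    rw [hXY]
end

section
/- (Example 3.4, infinitesimal cocycle.) Let q ∈ ℂ be nonzero and not a root of unity, and let Ψ^{(1)} : A_q⊗B → B⊗A_q be the ℂ-linear map determined by Ψ^{(1)}(a^kā^l ⊗ b^r) = q^{lr}·[k]_q·[r]_q·b^{r+1}⊗a^{k−1}ā^{l+1} for k ≥ 1 and Ψ^{(1)}(a^0ā^l ⊗ b^r) = 0. Then Ψ^{(1)} is a 2-cocycle: (id_B⊗μ_{A_q})∘(Ψ^{(1)}⊗id_{A_q})∘(id_{A_q}⊗Ψ_0) + (id_B⊗μ_{A_q})∘(Ψ_0⊗id_{A_q})∘(id_{A_q}⊗Ψ^{(1)}) = Ψ^{(1)}∘(μ_{A_q}⊗id_B) and (μ_B⊗id_{A_q})∘(id_B⊗Ψ^{(1)})∘(Ψ_0⊗id_B)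 + (μ_B⊗id_{A_q})∘(id_B⊗Ψ_0)∘(Ψ^{(1)}⊗id_B) = Ψ^{(1)}∘(id_{A_q}⊗μ_B). -/
/-!
Both identities are linear in each tensor factor, so it suffices to check them on basis
monomials `a^k ā^l`, `b^r`. There every term is a multiple of one monomial of `B ⊗ A_q`, and
after collecting the powers of `q` contributed by `Ψ₀`, `Ψ⁽¹⁾` and `μ_{A_q}`, each identity becomes
`[m + n]_q = [m]_q + q^m [n]_q`: with `m, n` the `a`-degrees for the first identity and the
`b`-degrees for the second.
-/

open TensorProduct

/-- The underlying module of the algebra `A_q`: the free `ℂ`-module with basis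
`{a^k ā^l : (k,l) ∈ ℕ × ℕ}`, a basis element being `Finsupp.single (k,l) 1`. -/
abbrev Aq : Type := (ℕ × ℕ) →₀ ℂ

/-- `B = ℂ[b]`, the polynomial algebra, with basis `{b^r = Finsupp.single r 1}`. -/
abbrev Bpoly : Type := AddMonoidAlgebra ℂ ℕ

/-- The multiplication of `A_q`: `(a^k ā^l)·(a^r ā^s) = q^{lr}·a^{k+r} ā^{l+s}`,
as a bilinear map. -/
noncomputable def muq (q : ℂ) : Aq →ₗ[ℂ] Aq →ₗ[ℂ] Aq :=
  Finsupp.lift (Aq →ₗ[ℂ] Aq) ℂ (ℕ × ℕ) fun p =>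
    Finsupp.lift Aq ℂ (ℕ × ℕ) fun p' =>
      (q ^ (p.2 * p'.1)) • Finsupp.single (p.1 + p'.1, p.2 + p'.2) (1 : ℂ)

/-- The map `Ψ₀ : A_q ⊗ B → B ⊗ A_q`, `a^k ā^l ⊗ b^r ↦ q^{lr}·b^r ⊗ a^k ā^l`. -/
noncomputable def psiq0 (q : ℂ) : Aq ⊗[ℂ] Bpoly →ₗ[ℂ] Bpoly ⊗[ℂ] Aq :=
  TensorProduct.lift <|
    Finsupp.lift (Bpoly →ₗ[ℂ] Bpoly ⊗[ℂ] Aq) ℂ (ℕ × ℕ) fun p =>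
      (Finsupp.lift (Bpoly ⊗[ℂ] Aq) ℂ ℕ fun r =>
        (q ^ (p.2 * r)) •
          ((AddMonoidAlgebra.single r (1 : ℂ) : Bpoly) ⊗ₜ[ℂ] (Finsupp.single p (1 : ℂ) : Aq)))
        ∘ₗ (AddMonoidAlgebra.coeffLinearEquiv ℂ).toLinearMap


/-- The `q`-integer `[m]_q = 1 + q + ⋯ + q^{m−1}`. -/
noncomputable def qint (q : ℂ) (m : ℕ) : ℂ := ∑ i ∈ Finset.range m, q ^ i

/-- `Ψ⁽¹⁾ : A_q ⊗ B → B ⊗ A_q`,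
`a^k ā^l ⊗ b^r ↦ q^{lr}·[k]_q·[r]_q·b^{r+1} ⊗ a^{k−1} ā^{l+1}`
(which vanishes for `k = 0`, as `[0]_q = 0`). -/
noncomputable def psiq1 (q : ℂ) : Aq ⊗[ℂ] Bpoly →ₗ[ℂ] Bpoly ⊗[ℂ] Aq :=
  TensorProduct.lift <|
    Finsupp.lift (Bpoly →ₗ[ℂ] Bpoly ⊗[ℂ] Aq) ℂ (ℕ × ℕ) fun p =>
      (Finsupp.lift (Bpoly ⊗[ℂ] Aq) ℂ ℕ fun r =>
        (q ^ (p.2 * r) * qint q p.1 * qint q r) •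
          ((AddMonoidAlgebra.single (r + 1) (1 : ℂ) : Bpoly)
            ⊗ₜ[ℂ] (Finsupp.single (p.1 - 1, p.2 + 1) (1 : ℂ) : Aq)))
        ∘ₗ (AddMonoidAlgebra.coeffLinearEquiv ℂ).toLinearMap

section Twist
variable {R A B : Type*} [CommRing R] [AddCommGroup A] [Module R A] [AddCommGroup B] [Module R B]

theorem twL_tmul_tmul_of_apply_eq {μ : A ⊗[R] A →ₗ[R] A} {ψ : A ⊗[R] B →ₗ[R] B ⊗[R] A}
    {x x' : A} {u u' : B} {c : R} (h : ψ (x ⊗ₜ u) = c • (u' ⊗ₜ x')) (y : A) :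
    twL μ ψ (x ⊗ₜ (u ⊗ₜ y)) = c • (u' ⊗ₜ μ (x' ⊗ₜ y)) := by
  simp [twL, h, smul_tmul']

theorem twR_tmul_tmul_of_apply_eq {ν : B ⊗[R] B →ₗ[R] B} {ψ : A ⊗[R] B →ₗ[R] B ⊗[R] A}
    {x x' : A} {v v' : B} {c : R} (h : ψ (x ⊗ₜ v) = c • (v' ⊗ₜ x')) (u : B) :
    twR ν ψ ((u ⊗ₜ x) ⊗ₜ v) = c • (ν (u ⊗ₜ v') ⊗ₜ x') := by
  simp [twR, h]

end Twist

theorem qint_zero (q : ℂ) : qint q 0 = 0 := by simp [qint]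

theorem qint_add (q : ℂ) (m n : ℕ) : qint q (m + n) = qint q m + q ^ m * qint q n := by
  simp [qint, Finset.sum_range_add, pow_add, Finset.mul_sum]

theorem muq_single_single (q : ℂ) (p p' : ℕ × ℕ) (c c' : ℂ) :
    muq q (Finsupp.single p c) (Finsupp.single p' c') =
      (c * c' * q ^ (p.2 * p'.1)) • Finsupp.single (p.1 + p'.1, p.2 + p'.2) 1 := by
  simp [muq, Finsupp.sum_single_index, mul_smul]

theorem psiq0_single_tmul_single (q : ℂ) (p : ℕ × ℕ) (r : ℕ) (c d : ℂ) :
    psiq0 q (Finsupp.single p c ⊗ₜ AddMonoidAlgebra.single r d) =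
      (c * d * q ^ (p.2 * r)) • (AddMonoidAlgebra.single r 1 ⊗ₜ Finsupp.single p 1) := by
  simp [psiq0, smul_smul, mul_assoc]

theorem psiq1_single_tmul_single (q : ℂ) (p : ℕ × ℕ) (r : ℕ) (c d : ℂ) :
    psiq1 q (Finsupp.single p c ⊗ₜ AddMonoidAlgebra.single r d) =
      (c * d * (q ^ (p.2 * r) * qint q p.1 * qint q r)) •
        (AddMonoidAlgebra.single (r + 1) 1 ⊗ₜ Finsupp.single (p.1 - 1, p.2 + 1) 1) := by
  simp [psiq1, smul_smul, mul_assoc]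

theorem psiq1_cocycle_muq (q : ℂ) :
    twL (lift (muq q)) (psiq1 q) ∘ₗ LinearMap.lTensor Aq (psiq0 q)
      + twL (lift (muq q)) (psiq0 q) ∘ₗ LinearMap.lTensor Aq (psiq1 q)
      = psiq1 q ∘ₗ LinearMap.rTensor Bpoly (lift (muq q))
          ∘ₗ (TensorProduct.assoc ℂ Aq Aq Bpoly).symm.toLinearMap := by
  ext ⟨k, l⟩ ⟨k', l'⟩ r
  simp only [LinearMap.coe_comp, Function.comp_apply, Finsupp.lsingle_apply,
    AlgebraTensorModule.curry_apply, LinearMap.restrictScalars_self,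
    AddMonoidAlgebra.lsingle_apply, curry_apply, LinearMap.add_apply,
    LinearMap.lTensor_tmul, psiq0_single_tmul_single, psiq1_single_tmul_single, tmul_smul, map_smul,
    twL_tmul_tmul_of_apply_eq (psiq1_single_tmul_single q _ _ 1 1), lift.tmul, muq_single_single,
    twL_tmul_tmul_of_apply_eq (psiq0_single_tmul_single q _ _ 1 1),
    LinearEquiv.coe_coe, assoc_symm_tmul, LinearMap.rTensor_tmul, smul_smul, one_mul, mul_one,
    ← smul_tmul']
  -- `a^{k-1}` is truncated at `k = 0`, where the factor `[0]_q = 0` kills the term.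
  rcases k with _ | k <;> rcases k' with _ | k'
  · simp [qint_zero]
  · simp only [qint_zero, mul_zero, zero_mul, zero_smul, zero_add, Nat.add_sub_cancel]
    rw [← add_assoc]
    congr 1
    ring
  · simp only [qint_zero, mul_zero, zero_mul, zero_smul, add_zero, Nat.add_sub_cancel, Nat.zero_sub]
    rw [add_right_comm l]
    congr 1
    ring
  · simp only [Nat.add_sub_cancel]
    rw [show k + 1 + (k' + 1) - 1 = k + 1 + k' by omega, show k + (k' + 1) = k + 1 + k' by omega,
      show l + 1 + l' = l + l' + 1 by omega, ← add_assoc l l' 1, ← add_smul,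
      add_comm (k + 1) (k' + 1), qint_add q (k' + 1)]
    congr 1
    ring

theorem psiq1_cocycle_mul' (q : ℂ) :
    twR (LinearMap.mul' ℂ Bpoly) (psiq1 q) ∘ₗ LinearMap.rTensor Bpoly (psiq0 q)
      + twR (LinearMap.mul' ℂ Bpoly) (psiq0 q) ∘ₗ LinearMap.rTensor Bpoly (psiq1 q)
      = psiq1 q ∘ₗ LinearMap.lTensor Aq (LinearMap.mul' ℂ Bpoly)
          ∘ₗ (TensorProduct.assoc ℂ Aq Bpoly Bpoly).toLinearMap := by
  ext ⟨k, l⟩ r s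
  simp only [LinearMap.coe_comp, Function.comp_apply, Finsupp.lsingle_apply,
    AlgebraTensorModule.curry_apply, LinearMap.restrictScalars_self,
    AddMonoidAlgebra.lsingle_apply, curry_apply, LinearMap.add_apply,
    LinearMap.rTensor_tmul, psiq0_single_tmul_single, psiq1_single_tmul_single, ← smul_tmul',
    map_smul,
    twR_tmul_tmul_of_apply_eq (psiq1_single_tmul_single q _ _ 1 1),
    twR_tmul_tmul_of_apply_eq (psiq0_single_tmul_single q _ _ 1 1),
    LinearEquiv.coe_coe, assoc_tmul, LinearMap.lTensor_tmul, LinearMap.mul'_apply,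
    AddMonoidAlgebra.single_mul_single, smul_smul, one_mul, mul_one]
  rw [← add_assoc, add_right_comm r 1 s, ← add_smul, add_comm r s, qint_add q s]
  congr 1
  ring

theorem quantum_plane_infinitesimal_cocycle_general (q : ℂ) :
    letI μA : Aq ⊗[ℂ] Aq →ₗ[ℂ] Aq := TensorProduct.lift (muq q)
    letI μB := LinearMap.mul' ℂ Bpoly
    letI ψ := psiq0 q
    letI ψ₁ := psiq1 q
    -- (E3) with μ_A⁽¹⁾ = 0
    (∀ (x y : Aq) (u : Bpoly),
        twL μA ψ₁ (x ⊗ₜ[ℂ] ψ (y ⊗ₜ[ℂ] u)) + twL μA ψ (x ⊗ₜ[ℂ] ψ₁ (y ⊗ₜ[ℂ] u))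
          = ψ₁ (muq q x y ⊗ₜ[ℂ] u)) ∧
    -- (E4) with μ_B⁽¹⁾ = 0
    (∀ (x : Aq) (u v : Bpoly),
        twR μB ψ₁ (ψ (x ⊗ₜ[ℂ] u) ⊗ₜ[ℂ] v) + twR μB ψ (ψ₁ (x ⊗ₜ[ℂ] u) ⊗ₜ[ℂ] v)
          = ψ₁ (x ⊗ₜ[ℂ] (u * v))) := by
  refine ⟨fun x y u => ?_, fun x u v => ?_⟩
  · simpa using LinearMap.congr_fun (psiq1_cocycle_muq q) (x ⊗ₜ (y ⊗ₜ u))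
  · simpa using LinearMap.congr_fun (psiq1_cocycle_mul' q) ((x ⊗ₜ u) ⊗ₜ v)

/-- Example 3.4, infinitesimal cocycle: `Ψ⁽¹⁾` is a
2-cocycle in `C•(X(B,A))`, i.e. satisfies (E3) and (E4) with
`μ_A⁽¹⁾ = 0`, `μ_B⁽¹⁾ = 0`. -/
theorem quantum_plane_infinitesimal_cocycle (q : ℂ) (hq : q ≠ 0)
    (hqroot : ∀ m : ℕ, 1 ≤ m → q ^ m ≠ 1) :
    letI μA : Aq ⊗[ℂ] Aq →ₗ[ℂ] Aq := TensorProduct.lift (muq q)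
    letI μB := LinearMap.mul' ℂ Bpoly
    letI ψ := psiq0 q
    letI ψ₁ := psiq1 q
    -- (E3) with μ_A⁽¹⁾ = 0
    (∀ (x y : Aq) (u : Bpoly),
        twL μA ψ₁ (x ⊗ₜ[ℂ] ψ (y ⊗ₜ[ℂ] u)) + twL μA ψ (x ⊗ₜ[ℂ] ψ₁ (y ⊗ₜ[ℂ] u))
          = ψ₁ (muq q x y ⊗ₜ[ℂ] u)) ∧
    -- (E4) with μ_B⁽¹⁾ = 0
    (∀ (x : Aq) (u v : Bpoly),
        twR μB ψ₁ (ψ (x ⊗ₜ[ℂ] u) ⊗ₜ[ℂ] v) + twR μB ψ (ψ₁ (x ⊗ₜ[ℂ] u) ⊗ₜ[ℂ] v)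
          = ψ₁ (x ⊗ₜ[ℂ] (u * v))) :=
  quantum_plane_infinitesimal_cocycle_general q
end

section
/- (Example 3.4, presentation.) Let q ∈ ℂ be nonzero and not a root of unity and let t ∈ ℂ. Let F be the free associative ℂ-algebra on three generators a, ā, b, and let I be the two-sided ideal of F generated by the elements ā·a − q·a·ā, ā·b − q·b·ā, and a·b − b·a − t·b²·ā. Then the images in F/I of the monomials b^r·a^k·ā^l, for (r,k,l) ∈ ℕ³, form a ℂ-vector space basis of F/I. -/
/-!
STATEMENT 13 (Example 3.4, presentation): for `q ∈ ℂ` nonzero and not a root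
of unity and `t ∈ ℂ`, the algebra with generators `a, ā, b` and relations
`ā·a = q·a·ā`, `ā·b = q·b·ā`, `a·b = b·a + t·b²·ā` has the monomials
`b^r·a^k·ā^l` as a `ℂ`-vector-space basis.
-/

open FreeAlgebra

/-- Generators: `a`, `ā`, `b`. -/
inductive Gen | a | abar | b

/-- The free associative `ℂ`-algebra on `a, ā, b`. -/
abbrev F : Type := FreeAlgebra ℂ Gen

/-- The relations `ā·a = q·a·ā`, `ā·b = q·b·ā`, `a·b = b·a + t·b²·ā`
(quotienting `F` by the relation `Rel q t` is exactly quotienting by the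
two-sided ideal generated by the corresponding differences). -/
inductive PresRel (q t : ℂ) : F → F → Prop
  | rel1 : PresRel q t (ι ℂ Gen.abar * ι ℂ Gen.a) (q • (ι ℂ Gen.a * ι ℂ Gen.abar))
  | rel2 : PresRel q t (ι ℂ Gen.abar * ι ℂ Gen.b) (q • (ι ℂ Gen.b * ι ℂ Gen.abar))
  | rel3 : PresRel q t (ι ℂ Gen.a * ι ℂ Gen.b)
      (ι ℂ Gen.b * ι ℂ Gen.a + t • (ι ℂ Gen.b * ι ℂ Gen.b * ι ℂ Gen.abar))

namespace Pres13

noncomputable section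

/-- coefficient `c r = t (1 + q + ... + q^{r-1})` -/
def c (q t : ℂ) (r : ℕ) : ℂ := t * ∑ i ∈ Finset.range r, q ^ i

@[simp] lemma c_zero (q t : ℂ) : c q t 0 = 0 := by simp [c]

lemma c_succ (q t : ℂ) (r : ℕ) : c q t (r + 1) = c q t r + t * q ^ r := by
  simp [c, Finset.sum_range_succ, mul_add]

abbrev V : Type := (ℕ × ℕ × ℕ) →₀ ℂ

def opB : V →ₗ[ℂ] V :=
  Finsupp.lsum ℂ fun w => Finsupp.lsingle (w.1 + 1, w.2.1, w.2.2)

def opAbar (q : ℂ) : V →ₗ[ℂ] V :=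
  Finsupp.lsum ℂ fun w => q ^ (w.1 + w.2.1) • Finsupp.lsingle (w.1, w.2.1, w.2.2 + 1)

def opA (q t : ℂ) : V →ₗ[ℂ] V :=
  Finsupp.lsum ℂ fun w =>
    Finsupp.lsingle (w.1, w.2.1 + 1, w.2.2) +
      (c q t w.1 * q ^ w.2.1) • Finsupp.lsingle (w.1 + 1, w.2.1, w.2.2 + 1)

@[simp] lemma opB_single (r k l : ℕ) (x : ℂ) :
    opB (Finsupp.single (r, k, l) x) = Finsupp.single (r + 1, k, l) x := by
  simp [opB]

@[simp] lemma opAbar_single (q : ℂ) (r k l : ℕ) (x : ℂ) :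
    opAbar q (Finsupp.single (r, k, l) x) = Finsupp.single (r, k, l + 1) (q ^ (r + k) * x) := by
  simp [opAbar, Finsupp.smul_single, smul_eq_mul]

@[simp] lemma opA_single (q t : ℂ) (r k l : ℕ) (x : ℂ) :
    opA q t (Finsupp.single (r, k, l) x) =
      Finsupp.single (r, k + 1, l) x +
        Finsupp.single (r + 1, k, l + 1) (c q t r * q ^ k * x) := by
  simp [opA, Finsupp.smul_single, smul_eq_mul]

/-- the generators of the representation -/
def gen (q t : ℂ) : Gen → Module.End ℂ V
  | Gen.a => opA q t
  | Gen.abar => opAbar q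
  | Gen.b => opB

def repF (q t : ℂ) : F →ₐ[ℂ] Module.End ℂ V := FreeAlgebra.lift ℂ (gen q t)

lemma repF_rel (q t : ℂ) : ∀ ⦃x y : F⦄, PresRel q t x y → repF q t x = repF q t y := by
  intro x y h
  induction h with
  | rel1 =>
      simp only [map_mul, map_smul, repF, FreeAlgebra.lift_ι_apply, gen]
      apply Finsupp.lhom_ext
      rintro ⟨r, k, l⟩ x
      simp only [Module.End.mul_apply, LinearMap.smul_apply, opAbar_single, opA_single, map_add,
        Finsupp.smul_single, smul_eq_mul, smul_add]
      congr 1 <;> (congr 1; ring)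
  | rel2 =>
      simp only [map_mul, map_smul, repF, FreeAlgebra.lift_ι_apply, gen]
      apply Finsupp.lhom_ext
      rintro ⟨r, k, l⟩ x
      simp only [Module.End.mul_apply, LinearMap.smul_apply, opAbar_single, opB_single, map_add,
        Finsupp.smul_single, smul_eq_mul, smul_add]
      congr 1
      ring
  | rel3 =>
      simp only [map_mul, map_smul, map_add, repF, FreeAlgebra.lift_ι_apply, gen]
      apply Finsupp.lhom_ext
      rintro ⟨r, k, l⟩ x
      simp only [Module.End.mul_apply, LinearMap.smul_apply, LinearMap.add_apply, opAbar_single,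
        opB_single, opA_single, map_add, Finsupp.smul_single, smul_eq_mul, smul_add]
      rw [show c q t (r + 1) * q ^ k * x
            = c q t r * q ^ k * x + t * (q ^ (r + k) * x) by rw [c_succ]; ring,
        Finsupp.single_add, add_assoc]
      abel

def rep (q t : ℂ) : RingQuot (PresRel q t) →ₐ[ℂ] Module.End ℂ V :=
  RingQuot.liftAlgHom ℂ ⟨repF q t, repF_rel q t⟩

lemma rep_mk (q t : ℂ) (x : F) :
    rep q t (RingQuot.mkAlgHom ℂ (PresRel q t) x) = repF q t x :=
  RingQuot.liftAlgHom_mkAlgHom_apply ℂ (repF q t) (repF_rel q t) x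

def ev (q t : ℂ) : RingQuot (PresRel q t) →ₗ[ℂ] V where
  toFun z := rep q t z (Finsupp.single (0, 0, 0) 1)
  map_add' x y := by simp
  map_smul' c x := by simp

lemma opAbar_pow (q : ℂ) (l m : ℕ) :
    ((opAbar q) ^ l) (Finsupp.single ((0 : ℕ), (0 : ℕ), m) (1 : ℂ))
      = Finsupp.single (0, 0, m + l) 1 := by
  induction l generalizing m with
  | zero => simp
  | succ n ih =>
      rw [pow_succ, Module.End.mul_apply]
      rw [show ((opAbar q) (Finsupp.single ((0:ℕ), (0:ℕ), m) (1:ℂ)))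
            = Finsupp.single (0, 0, m + 1) 1 by simp, ih]
      have : m + 1 + n = m + (n + 1) := by omega
      rw [this]

lemma opA_pow (q t : ℂ) (k m l : ℕ) :
    ((opA q t) ^ k) (Finsupp.single ((0 : ℕ), m, l) (1 : ℂ))
      = Finsupp.single (0, m + k, l) 1 := by
  induction k generalizing m with
  | zero => simp
  | succ n ih =>
      rw [pow_succ, Module.End.mul_apply]
      rw [show ((opA q t) (Finsupp.single ((0:ℕ), m, l) (1:ℂ)))
            = Finsupp.single (0, m + 1, l) 1 by simp, ih]
      have : m + 1 + n = m + (n + 1) := by omega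
      rw [this]

lemma opB_pow (r m k l : ℕ) (x : ℂ) :
    ((opB) ^ r) (Finsupp.single (m, k, l) x) = Finsupp.single (m + r, k, l) x := by
  induction r generalizing m with
  | zero => simp
  | succ n ih =>
      rw [pow_succ, Module.End.mul_apply, opB_single, ih]
      congr 2
      omega

lemma ev_monomial (q t : ℂ) (r k l : ℕ) :
    ev q t (RingQuot.mkAlgHom ℂ (PresRel q t)
      ((ι ℂ Gen.b) ^ r * (ι ℂ Gen.a) ^ k * (ι ℂ Gen.abar) ^ l))
      = Finsupp.single (r, k, l) 1 := by
  show rep q t _ _ = _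
  rw [rep_mk]
  simp only [map_mul, map_pow, repF, FreeAlgebra.lift_ι_apply, gen]
  rw [Module.End.mul_apply, Module.End.mul_apply, opAbar_pow, opA_pow, opB_pow]
  simp

section Quot

variable (q t : ℂ)

abbrev Qt := RingQuot (PresRel q t)

def pA : Qt q t := RingQuot.mkAlgHom ℂ (PresRel q t) (ι ℂ Gen.a)
def pAb : Qt q t := RingQuot.mkAlgHom ℂ (PresRel q t) (ι ℂ Gen.abar)
def pB : Qt q t := RingQuot.mkAlgHom ℂ (PresRel q t) (ι ℂ Gen.b)

lemma rel1' : pAb q t * pA q t = q • (pA q t * pAb q t) := by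
  have := RingQuot.mkAlgHom_rel ℂ (PresRel.rel1 (q := q) (t := t))
  simpa [pA, pAb, map_mul, map_smul] using this

lemma rel2' : pAb q t * pB q t = q • (pB q t * pAb q t) := by
  have := RingQuot.mkAlgHom_rel ℂ (PresRel.rel2 (q := q) (t := t))
  simpa [pB, pAb, map_mul, map_smul] using this

lemma rel3' : pA q t * pB q t = pB q t * pA q t + t • (pB q t * pB q t * pAb q t) := by
  have := RingQuot.mkAlgHom_rel ℂ (PresRel.rel3 (q := q) (t := t))
  simpa [pA, pB, pAb, map_mul, map_add, map_smul] using this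

lemma abar_pow_b (n : ℕ) : pAb q t * pB q t ^ n = q ^ n • (pB q t ^ n * pAb q t) := by
  induction n with
  | zero => simp
  | succ m ih =>
      rw [pow_succ', ← mul_assoc, rel2', smul_mul_assoc, mul_assoc, ih]
      rw [mul_smul_comm, smul_smul, ← mul_assoc, ← pow_succ']

lemma abar_pow_a (n : ℕ) : pAb q t * pA q t ^ n = q ^ n • (pA q t ^ n * pAb q t) := by
  induction n with
  | zero => simp
  | succ m ih =>
      rw [pow_succ', ← mul_assoc, rel1', smul_mul_assoc, mul_assoc, ih]
      rw [mul_smul_comm, smul_smul, ← mul_assoc, ← pow_succ']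

lemma a_pow_b (n : ℕ) :
    pA q t * pB q t ^ n = pB q t ^ n * pA q t + c q t n • (pB q t ^ (n + 1) * pAb q t) := by
  induction n with
  | zero => simp
  | succ m ih =>
      rw [pow_succ', ← mul_assoc, rel3', add_mul, smul_mul_assoc, mul_assoc, ih,
        mul_assoc, mul_assoc, abar_pow_b]
      simp only [mul_add, mul_smul_comm, smul_smul]
      rw [show pB q t * (pB q t ^ (m + 1) * pAb q t) = pB q t ^ (m + 1 + 1) * pAb q t from by
          rw [← mul_assoc, ← pow_succ'],
        show pB q t * (pB q t * (pB q t ^ m * pAb q t))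
            = pB q t ^ (m + 1 + 1) * pAb q t from by
          rw [← mul_assoc (pB q t) (pB q t ^ m) (pAb q t), ← pow_succ',
            ← mul_assoc, ← pow_succ'],
        add_assoc, ← add_smul, ← mul_assoc, c_succ]

lemma act_b (r k l : ℕ) :
    pB q t * (pB q t ^ r * pA q t ^ k * pAb q t ^ l)
      = pB q t ^ (r + 1) * pA q t ^ k * pAb q t ^ l := by
  rw [← mul_assoc, ← mul_assoc, ← pow_succ']

lemma act_ab (r k l : ℕ) :
    pAb q t * (pB q t ^ r * pA q t ^ k * pAb q t ^ l)
      = q ^ (r + k) • (pB q t ^ r * pA q t ^ k * pAb q t ^ (l + 1)) := by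
  rw [← mul_assoc, ← mul_assoc, abar_pow_b, smul_mul_assoc, smul_mul_assoc,
    mul_assoc (pB q t ^ r), abar_pow_a]
  simp only [smul_mul_assoc, mul_smul_comm, smul_smul, mul_assoc, pow_succ', pow_add]

lemma act_a (r k l : ℕ) :
    pA q t * (pB q t ^ r * pA q t ^ k * pAb q t ^ l)
      = pB q t ^ r * pA q t ^ (k + 1) * pAb q t ^ l
        + (c q t r * q ^ k) • (pB q t ^ (r + 1) * pA q t ^ k * pAb q t ^ (l + 1)) := by
  rw [← mul_assoc, ← mul_assoc, a_pow_b, add_mul, add_mul,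
    mul_assoc (pB q t ^ r) (pA q t) (pA q t ^ k), ← pow_succ',
    smul_mul_assoc, smul_mul_assoc, mul_assoc (pB q t ^ (r + 1)), abar_pow_a]
  simp only [smul_mul_assoc, mul_smul_comm, smul_smul, mul_assoc, pow_succ', pow_add]

/-- the monomial family in the quotient -/
def vfam : ℕ × ℕ × ℕ → Qt q t := fun w =>
  RingQuot.mkAlgHom ℂ (PresRel q t)
    ((ι ℂ Gen.b) ^ w.1 * (ι ℂ Gen.a) ^ w.2.1 * (ι ℂ Gen.abar) ^ w.2.2)

lemma vfam_eq (w : ℕ × ℕ × ℕ) :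
    vfam q t w = pB q t ^ w.1 * pA q t ^ w.2.1 * pAb q t ^ w.2.2 := by
  simp [vfam, pA, pB, pAb, map_mul, map_pow]

lemma indep : LinearIndependent ℂ (vfam q t) := by
  apply LinearIndependent.of_comp (ev q t)
  have h : (⇑(ev q t) ∘ vfam q t) = fun w : ℕ × ℕ × ℕ => Finsupp.single w 1 := by
    funext w
    exact ev_monomial q t w.1 w.2.1 w.2.2
  rw [h, ← Finsupp.coe_basisSingleOne]
  exact Finsupp.basisSingleOne.linearIndependent

lemma mono_mem (r k l : ℕ) :
    pB q t ^ r * pA q t ^ k * pAb q t ^ l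
      ∈ Submodule.span ℂ (Set.range (vfam q t)) := by
  rw [← vfam_eq q t (r, k, l)]
  exact Submodule.subset_span ⟨(r, k, l), rfl⟩

lemma span_closed_gen (g : Gen) (s : Qt q t)
    (hs : s ∈ Submodule.span ℂ (Set.range (vfam q t))) :
    RingQuot.mkAlgHom ℂ (PresRel q t) (ι ℂ g) * s
      ∈ Submodule.span ℂ (Set.range (vfam q t)) := by
  set S := Submodule.span ℂ (Set.range (vfam q t)) with hS
  induction hs using Submodule.span_induction with
  | mem x hx =>
      obtain ⟨⟨r, k, l⟩, rfl⟩ := hx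
      rw [vfam_eq]
      cases g with
      | a =>
          rw [show RingQuot.mkAlgHom ℂ (PresRel q t) (ι ℂ Gen.a) = pA q t from rfl, act_a]
          exact add_mem (mono_mem q t r (k + 1) l)
            (Submodule.smul_mem _ _ (mono_mem q t (r + 1) k (l + 1)))
      | abar =>
          rw [show RingQuot.mkAlgHom ℂ (PresRel q t) (ι ℂ Gen.abar) = pAb q t from rfl,
            act_ab]
          exact Submodule.smul_mem _ _ (mono_mem q t r k (l + 1))
      | b =>
          rw [show RingQuot.mkAlgHom ℂ (PresRel q t) (ι ℂ Gen.b) = pB q t from rfl, act_b]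
          exact mono_mem q t (r + 1) k l
  | zero => simpa using Submodule.zero_mem S
  | add x y _ _ hx hy => rw [mul_add]; exact add_mem hx hy
  | smul a x _ hx => rw [mul_smul_comm]; exact Submodule.smul_mem _ _ hx

lemma span_mul_mem (x : F) (s : Qt q t)
    (hs : s ∈ Submodule.span ℂ (Set.range (vfam q t))) :
    RingQuot.mkAlgHom ℂ (PresRel q t) x * s
      ∈ Submodule.span ℂ (Set.range (vfam q t)) := by
  induction x using FreeAlgebra.induction generalizing s with
  | grade0 r =>
      rw [AlgHom.commutes, ← Algebra.smul_def]
      exact Submodule.smul_mem _ _ hs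
  | grade1 g => exact span_closed_gen q t g s hs
  | mul x y hx hy =>
      rw [map_mul, mul_assoc]
      exact hx _ (hy _ hs)
  | add x y hx hy =>
      rw [map_add, add_mul]
      exact add_mem (hx _ hs) (hy _ hs)

lemma one_mem_span : (1 : Qt q t) ∈ Submodule.span ℂ (Set.range (vfam q t)) := by
  have := mono_mem q t 0 0 0
  simpa using this

lemma span_top : Submodule.span ℂ (Set.range (vfam q t)) = ⊤ := by
  rw [eq_top_iff]
  rintro z -
  obtain ⟨x, rfl⟩ := RingQuot.mkAlgHom_surjective ℂ (PresRel q t) z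
  have := span_mul_mem q t x 1 (one_mem_span q t)
  simpa using this

end Quot

end

end Pres13

/-- the images of the monomials `b^r·a^k·ā^l` form a basis
of `F/I`. -/
theorem presentation_basis (q t : ℂ) (hq : q ≠ 0)
    (hqroot : ∀ m : ℕ, 1 ≤ m → q ^ m ≠ 1) :
    letI π := RingQuot.mkAlgHom ℂ (PresRel q t)
    letI v : ℕ × ℕ × ℕ → RingQuot (PresRel q t) := fun w =>
      π ((ι ℂ Gen.b) ^ w.1 * (ι ℂ Gen.a) ^ w.2.1 * (ι ℂ Gen.abar) ^ w.2.2)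
    LinearIndependent ℂ v ∧ Submodule.span ℂ (Set.range v) = ⊤ :=
  ⟨Pres13.indep q t, Pres13.span_top q t⟩
end

section
/- (Example 3.3, closed form of the deformed twisting.) Let R be a commutative ring and q ∈ R. Let A_q be the free R-module with basis {a^kā^l : (k,l) ∈ ℕ×ℕ} with multiplication determined by (a^kā^l)·(a^rā^s) = q^{lr}·a^{k+r}ā^{l+s}, and let B = R[b]. Then A_q is an associative unital R-algebra, and the R-linear map Ψ_q : A_q⊗B → B⊗A_q determined by Ψ_q(a^kā^l ⊗ b^r) = q^{lr}·Σ_{i=0}^{k} binom(k, i)_q·binom(r+i−1, i)_q·(q;q)_i·b^{r+i}⊗a^{k−i}ā^{l+i} is a twisting map for A_q and B. -/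
open TensorProduct

variable (R : Type*) [CommRing R]

/-- The underlying module of `A_q`: the free `R`-module with basis
`{a^k ā^l : (k,l) ∈ ℕ × ℕ}`, a basis element being `Finsupp.single (k,l) 1`. -/
abbrev AqR : Type _ := (ℕ × ℕ) →₀ R

/-- `B = R[b]`, with basis `{b^r = Finsupp.single r 1}`. -/
abbrev BpolyR : Type _ := AddMonoidAlgebra R ℕ

/-- The multiplication `(a^k ā^l)·(a^r ā^s) = q^{lr}·a^{k+r} ā^{l+s}` of `A_q`. -/
noncomputable def muqR {R : Type*} [CommRing R] (q : R) :
    AqR R →ₗ[R] AqR R →ₗ[R] AqR R :=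
  Finsupp.lift (AqR R →ₗ[R] AqR R) R (ℕ × ℕ) fun p =>
    Finsupp.lift (AqR R) R (ℕ × ℕ) fun p' =>
      (q ^ (p.2 * p'.1)) • Finsupp.single (p.1 + p'.1, p.2 + p'.2) (1 : R)

/-- The Gaussian (`q`-)binomial coefficient `binom(m, i)_q` (the value at `q`
of the Gaussian binomial polynomial), via the `q`-Pascal recursion. -/
noncomputable def qbinomR {R : Type*} [CommRing R] (q : R) : ℕ → ℕ → R
  | _, 0 => 1
  | 0, _ + 1 => 0
  | m + 1, i + 1 => qbinomR q m i + q ^ (i + 1) * qbinomR q m (i + 1)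

/-- `(q;q)_i = (1−q)(1−q²)⋯(1−qⁱ)`, with `(q;q)₀ = 1`. -/
noncomputable def qPochhammer' {R : Type*} [CommRing R] (q : R) (i : ℕ) : R :=
  ∏ j ∈ Finset.range i, (1 - q ^ (j + 1))

/-- The map
`Ψ_q(a^k ā^l ⊗ b^r) = q^{lr}·Σ_{i=0}^k binom(k,i)_q binom(r+i−1,i)_q (q;q)_i·b^{r+i} ⊗ a^{k−i} ā^{l+i}`. -/
noncomputable def psiqR {R : Type*} [CommRing R] (q : R) :
    AqR R ⊗[R] BpolyR R →ₗ[R] BpolyR R ⊗[R] AqR R :=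
  TensorProduct.lift <|
    Finsupp.lift (BpolyR R →ₗ[R] BpolyR R ⊗[R] AqR R) R (ℕ × ℕ) fun p =>
      (Finsupp.lift (BpolyR R ⊗[R] AqR R) R ℕ fun r =>
        ∑ i ∈ Finset.range (p.1 + 1),
          (q ^ (p.2 * r) * qbinomR q p.1 i * qbinomR q (r + i - 1) i
              * qPochhammer' q i) •
            ((AddMonoidAlgebra.single (r + i) (1 : R) : BpolyR R)
              ⊗ₜ[R] (Finsupp.single (p.1 - i, p.2 + i) (1 : R) : AqR R)))
        ∘ₗ (AddMonoidAlgebra.coeffLinearEquiv R).toLinearMap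

/-!
Compatibility of `Ψ` with `μ_A` at `x` (for all `y`, `u`) passes from `x` and `x'` to `x x'`
by associativity of `μ_A`; once it holds everywhere, the same is true of compatibility with
`μ_B`. Since `A_q` is generated by `a` and `ā`, both twisting identities reduce to these two
generators, where `Ψ_q(ā ⊗ b^r) = q^r b^r ⊗ ā` and `Ψ_q(a ⊗ b^r) = b^r ⊗ a + (1 - q^r) b^{r+1} ⊗ ā`.
For `a` and `μ_A`, comparing coefficients of `Ψ_q(a^{m+1} ā^n ⊗ b^r)` gives, with
`c(k, i) = binom(k, i)_q binom(r+i-1, i)_q (q;q)_i`, the recursion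
`c(m+1, i+1) = c(m, i+1) + q^{m-i} (1 - q^{r+i}) c(m, i)`; it follows from the second `q`-Pascal
rule and from `binom(n, j+1)_q (1 - q^{j+1}) = binom(n-1, j)_q (1 - q^n)`.
For `a` and `μ_B` it is `1 - q^{r+t} = (1 - q^t) + q^t (1 - q^r)`.
-/

section QBinomial

variable {R : Type*} [CommRing R] (q : R)

@[simp] theorem qbinomR_zero_right (m : ℕ) : qbinomR q m 0 = 1 := by cases m <;> rfl

theorem qbinomR_succ_succ (m i : ℕ) :
    qbinomR q (m + 1) (i + 1) = qbinomR q m i + q ^ (i + 1) * qbinomR q m (i + 1) := rfl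

theorem qbinomR_eq_zero_of_lt {m i : ℕ} (h : m < i) : qbinomR q m i = 0 := by
  induction m generalizing i with
  | zero => obtain ⟨i, rfl⟩ := Nat.exists_eq_add_one.2 h; rfl
  | succ m ih =>
    obtain ⟨i, rfl⟩ := Nat.exists_eq_add_one.2 (Nat.zero_lt_of_lt h)
    rw [qbinomR_succ_succ, ih (by omega), ih (by omega), mul_zero, add_zero]

theorem qbinomR_succ_succ' (m j : ℕ) :
    qbinomR q (m + 1) (j + 1) = q ^ (m - j) * qbinomR q m j + qbinomR q m (j + 1) := by
  induction m generalizing j with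
  | zero =>
    cases j with
    | zero => simp [qbinomR_succ_succ, qbinomR_eq_zero_of_lt]
    | succ j => simp [qbinomR_succ_succ, qbinomR_eq_zero_of_lt]
  | succ m ih =>
    cases j with
    | zero =>
      have h1 := qbinomR_succ_succ q m 0
      have h2 := ih 0
      rw [qbinomR_succ_succ]
      simp only [qbinomR_zero_right, zero_add, pow_one, Nat.sub_zero, mul_one] at h1 h2 ⊢
      linear_combination q * h2 - h1
    | succ j =>
      have hA := ih j
      have hB := ih (j + 1)
      have hC := qbinomR_succ_succ q m j
      have hD := qbinomR_succ_succ q m (j + 1)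
      rw [qbinomR_succ_succ, Nat.add_sub_add_right]
      rcases le_or_gt (j + 1) m with hjm | hjm
      · have hpow : q ^ (j + 1 + 1) * q ^ (m - (j + 1)) = q ^ (m - j) * q ^ (j + 1) := by
          rw [← pow_add, ← pow_add]; congr 1; omega
        linear_combination hA - q ^ (m - j) * hC + q ^ (j + 1 + 1) * hB - hD
          + qbinomR q m (j + 1) * hpow
      · have hz := qbinomR_eq_zero_of_lt q hjm
        linear_combination hA - q ^ (m - j) * hC + q ^ (j + 1 + 1) * hB - hD
          + (q ^ (j + 1 + 1) * q ^ (m - (j + 1)) - q ^ (m - j) * q ^ (j + 1)) * hz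

theorem qbinomR_mul_one_sub_pow (n j : ℕ) :
    qbinomR q n (j + 1) * (1 - q ^ (j + 1)) = qbinomR q (n - 1) j * (1 - q ^ n) := by
  cases n with
  | zero => simp [qbinomR_eq_zero_of_lt]
  | succ n =>
    rw [Nat.add_sub_cancel]
    rcases le_or_gt j n with hjn | hjn
    · have h1 := qbinomR_succ_succ q n j
      have h2 := qbinomR_succ_succ' q n j
      have hpow : q ^ (j + 1) * q ^ (n - j) = q ^ (n + 1) := by
        rw [← pow_add]; congr 1; omega
      linear_combination (1 : R) * h1 - q ^ (j + 1) * h2 - qbinomR q n j * hpow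
    · rw [qbinomR_eq_zero_of_lt q hjn, qbinomR_eq_zero_of_lt q (by omega : n + 1 < j + 1)]
      ring

theorem qbinomR_one_mul_one_sub (n : ℕ) : qbinomR q n 1 * (1 - q) = 1 - q ^ n := by
  simpa using qbinomR_mul_one_sub_pow q n 0

theorem qPochhammer'_succ (i : ℕ) :
    qPochhammer' q (i + 1) = qPochhammer' q i * (1 - q ^ (i + 1)) :=
  Finset.prod_range_succ _ _

noncomputable def psiqCoeff (k r i : ℕ) : R :=
  qbinomR q k i * qbinomR q (r + i - 1) i * qPochhammer' q i

@[simp] theorem psiqCoeff_zero_right (k r : ℕ) : psiqCoeff q k r 0 = 1 := by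
  simp [psiqCoeff, qPochhammer']

theorem psiqCoeff_eq_zero_of_lt {k i : ℕ} (r : ℕ) (h : k < i) : psiqCoeff q k r i = 0 := by
  simp [psiqCoeff, qbinomR_eq_zero_of_lt q h]

theorem psiqCoeff_zero_left (k i : ℕ) (hi : 0 < i) : psiqCoeff q k 0 i = 0 := by
  simp [psiqCoeff, qbinomR_eq_zero_of_lt q (by omega : i - 1 < i)]

theorem psiqCoeff_succ_succ (m r i : ℕ) :
    psiqCoeff q (m + 1) r (i + 1) =
      psiqCoeff q m r (i + 1) + q ^ (m - i) * (1 - q ^ (r + i)) * psiqCoeff q m r i := by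
  have habs := qbinomR_mul_one_sub_pow q (r + i) i
  simp only [psiqCoeff, qPochhammer'_succ, qbinomR_succ_succ' q m i,
    show r + (i + 1) - 1 = r + i by omega]
  linear_combination q ^ (m - i) * qbinomR q m i * qPochhammer' q i * habs

end QBinomial

section RespectsMulA

variable {R A B : Type*} [CommRing R] [AddCommGroup A] [Module R A] [AddCommGroup B] [Module R B]
  (μ : A →ₗ[R] A →ₗ[R] A) (ψ : A ⊗[R] B →ₗ[R] B ⊗[R] A)

def RespectsMulA (x : A) : Prop :=
  ∀ (y : A) (u : B), ψ (μ x y ⊗ₜ u) = twL (lift μ) ψ (x ⊗ₜ ψ (y ⊗ₜ u))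

theorem twL_tmul_tmul (x : A) (b : B) (y : A) :
    twL (lift μ) ψ (x ⊗ₜ (b ⊗ₜ y)) = (μ.flip y).lTensor B (ψ (x ⊗ₜ b)) := by
  simp only [twL, LinearMap.coe_comp, LinearEquiv.coe_coe, Function.comp_apply,
    TensorProduct.assoc_symm_tmul, LinearMap.rTensor_tmul]
  induction ψ (x ⊗ₜ b) with
  | zero => simp
  | tmul b' x' => simp
  | add W W' hW hW' => simp [add_tmul, hW, hW']

theorem respectsMulA_iff (x : A) :
    RespectsMulA μ ψ x ↔
      ψ ∘ₗ (μ x).rTensor B = twL (lift μ) ψ ∘ₗ TensorProduct.mk R A (B ⊗[R] A) x ∘ₗ ψ :=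
  ⟨fun h => TensorProduct.ext' h, fun h y u => congr($h (y ⊗ₜ u))⟩

variable {μ ψ}

theorem twL_lTensor_flip (hμ : ∀ x y z, μ (μ x y) z = μ x (μ y z)) (x z : A) (W : B ⊗[R] A) :
    twL (lift μ) ψ (x ⊗ₜ (μ.flip z).lTensor B W) =
      (μ.flip z).lTensor B (twL (lift μ) ψ (x ⊗ₜ W)) := by
  induction W with
  | zero => simp
  | tmul b y =>
    have hflip : μ.flip (μ y z) = μ.flip z ∘ₗ μ.flip y := by ext x'; simp [hμ]
    simp [twL_tmul_tmul, hflip, LinearMap.lTensor_comp_apply]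
  | add W W' hW hW' => simp [tmul_add, hW, hW']

theorem RespectsMulA.twL_twL (hμ : ∀ x y z, μ (μ x y) z = μ x (μ y z)) {x : A}
    (hx : RespectsMulA μ ψ x) (x' : A) (W : B ⊗[R] A) :
    twL (lift μ) ψ (x ⊗ₜ twL (lift μ) ψ (x' ⊗ₜ W)) = twL (lift μ) ψ (μ x x' ⊗ₜ W) := by
  induction W with
  | zero => simp
  | tmul b z => rw [twL_tmul_tmul, twL_lTensor_flip hμ, ← hx, twL_tmul_tmul]
  | add W W' hW hW' => simp [tmul_add, hW, hW']

theorem RespectsMulA.mul (hμ : ∀ x y z, μ (μ x y) z = μ x (μ y z)) {x x' : A}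
    (hx : RespectsMulA μ ψ x) (hx' : RespectsMulA μ ψ x') : RespectsMulA μ ψ (μ x x') := by
  intro y u
  rw [hμ, hx, hx', hx.twL_twL hμ]

theorem RespectsMulA.add {x x' : A} (hx : RespectsMulA μ ψ x) (hx' : RespectsMulA μ ψ x') :
    RespectsMulA μ ψ (x + x') := by
  intro y u
  simp [add_tmul, hx y u, hx' y u]

theorem RespectsMulA.smul (c : R) {x : A} (hx : RespectsMulA μ ψ x) :
    RespectsMulA μ ψ (c • x) := by
  intro y u
  rw [map_smul, LinearMap.smul_apply, ← smul_tmul', map_smul, hx y u, ← smul_tmul', map_smul]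

theorem respectsMulA_of_unit {e : A} (he : ∀ y, μ e y = y) (hψ : ∀ b, ψ (e ⊗ₜ b) = b ⊗ₜ e) :
    RespectsMulA μ ψ e := by
  intro y u
  rw [he]
  induction ψ (y ⊗ₜ u) with
  | zero => simp
  | tmul b z => simp [twL_tmul_tmul, hψ, he]
  | add W W' hW hW' => simp [tmul_add, ← hW, ← hW']

end RespectsMulA

section RespectsMulB

variable {R A B : Type*} [CommRing R] [AddCommGroup A] [Module R A] [Ring B] [Algebra R B]
  (ψ : A ⊗[R] B →ₗ[R] B ⊗[R] A)

def RespectsMulB (x : A) : Prop :=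
  ∀ u v : B, ψ (x ⊗ₜ (u * v)) = twR (LinearMap.mul' R B) ψ (ψ (x ⊗ₜ u) ⊗ₜ v)

theorem twR_tmul_tmul (b : B) (y : A) (v : B) :
    twR (LinearMap.mul' R B) ψ ((b ⊗ₜ y) ⊗ₜ v) =
      (LinearMap.mulLeft R b).rTensor A (ψ (y ⊗ₜ v)) := by
  simp only [twR, LinearMap.coe_comp, LinearEquiv.coe_coe, Function.comp_apply,
    TensorProduct.assoc_tmul, LinearMap.lTensor_tmul]
  induction ψ (y ⊗ₜ v) with
  | zero => simp
  | tmul b' x' => simp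
  | add W W' hW hW' => simp [tmul_add, hW, hW']

theorem respectsMulB_iff (x : A) :
    RespectsMulB ψ x ↔
      ψ ∘ₗ TensorProduct.mk R A B x ∘ₗ LinearMap.mul' R B =
        twR (LinearMap.mul' R B) ψ ∘ₗ (ψ ∘ₗ TensorProduct.mk R A B x).rTensor B :=
  ⟨fun h => TensorProduct.ext' h, fun h u v => congr($h (u ⊗ₜ v))⟩

variable {ψ}

theorem RespectsMulB.add {x x' : A} (hx : RespectsMulB ψ x) (hx' : RespectsMulB ψ x') :
    RespectsMulB ψ (x + x') := by
  intro u v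
  simp [add_tmul, hx u v, hx' u v]

theorem RespectsMulB.smul (c : R) {x : A} (hx : RespectsMulB ψ x) :
    RespectsMulB ψ (c • x) := by
  intro u v
  rw [← smul_tmul', map_smul, hx u v, ← smul_tmul', map_smul, ← smul_tmul', map_smul]

theorem respectsMulB_of_unit {e : A} (hψ : ∀ b, ψ (e ⊗ₜ b) = b ⊗ₜ e) : RespectsMulB ψ e := by
  intro u v
  simp [hψ, twR_tmul_tmul]

variable {μ : A →ₗ[R] A →ₗ[R] A}

theorem twL_twR_comm (hL : ∀ x, RespectsMulA μ ψ x) {x : A} (hx : RespectsMulB ψ x)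
    (W : B ⊗[R] A) (v : B) :
    twL (lift μ) ψ (x ⊗ₜ twR (LinearMap.mul' R B) ψ (W ⊗ₜ v)) =
      twR (LinearMap.mul' R B) ψ (twL (lift μ) ψ (x ⊗ₜ W) ⊗ₜ v) := by
  induction W with
  | zero => simp
  | add W W' hW hW' => simp [add_tmul, tmul_add, hW, hW']
  | tmul b y =>
    rw [twR_tmul_tmul, twL_tmul_tmul]
    obtain ⟨S, hS⟩ := TensorProduct.exists_finset (ψ (y ⊗ₜ v))
    obtain ⟨T, hT⟩ := TensorProduct.exists_finset (ψ (x ⊗ₜ b))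
    calc twL (lift μ) ψ (x ⊗ₜ (LinearMap.mulLeft R b).rTensor A (ψ (y ⊗ₜ v)))
        = ∑ s ∈ S, (μ.flip s.2).lTensor B (twR (LinearMap.mul' R B) ψ (ψ (x ⊗ₜ b) ⊗ₜ s.1)) := by
          simp [hS, tmul_sum, twL_tmul_tmul, hx b]
      _ = ∑ s ∈ S, ∑ t ∈ T, (μ.flip s.2).lTensor B
            ((LinearMap.mulLeft R t.1).rTensor A (ψ (t.2 ⊗ₜ s.1))) := by
          simp [hT, sum_tmul, twR_tmul_tmul]
      _ = ∑ t ∈ T, ∑ s ∈ S, (LinearMap.mulLeft R t.1).rTensor A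
            ((μ.flip s.2).lTensor B (ψ (t.2 ⊗ₜ s.1))) := by
          have hcomm (f : A →ₗ[R] A) (g : B →ₗ[R] B) (W : B ⊗[R] A) :
              f.lTensor B (g.rTensor A W) = g.rTensor A (f.lTensor B W) := by
            rw [← LinearMap.comp_apply, LinearMap.lTensor_comp_rTensor,
              ← LinearMap.rTensor_comp_lTensor, LinearMap.comp_apply]
          simp only [hcomm, Finset.sum_comm (s := S)]
      _ = twR (LinearMap.mul' R B) ψ ((μ.flip y).lTensor B (ψ (x ⊗ₜ b)) ⊗ₜ v) := by
          simp [hT, sum_tmul, twR_tmul_tmul, hL _ y v, hS, tmul_sum, twL_tmul_tmul]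

theorem RespectsMulB.mul (hL : ∀ x, RespectsMulA μ ψ x) {x x' : A}
    (hx : RespectsMulB ψ x) (hx' : RespectsMulB ψ x') : RespectsMulB ψ (μ x x') := by
  intro u v
  rw [hL, hx', twL_twR_comm hL hx, hL]

end RespectsMulB

section Aq

variable {R : Type*} [CommRing R] (q : R)

theorem muqR_single_single (k l m n : ℕ) :
    muqR q (Finsupp.single (k, l) 1) (Finsupp.single (m, n) 1) =
      q ^ (l * m) • Finsupp.single (k + m, l + n) (1 : R) := by
  rw [muqR, Finsupp.lift_apply, Finsupp.sum_single_index (by simp), one_smul,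
    Finsupp.lift_apply, Finsupp.sum_single_index (by simp), one_smul]

theorem muqR_assoc (x y z : AqR R) : muqR q (muqR q x y) z = muqR q x (muqR q y z) := by
  suffices h : (muqR q).compr₂ (muqR q) =
      ((LinearMap.llcomp R (AqR R) (AqR R) (AqR R)) ∘ₗ muqR q).compl₂ (muqR q) from
    congr($h x y z)
  ext ⟨k, l⟩ ⟨m, n⟩ ⟨u, v⟩ : 6
  simp only [LinearMap.comp_apply, LinearMap.compr₂_apply, LinearMap.compl₂_apply,
    LinearMap.llcomp_apply, Finsupp.lsingle_apply, muqR_single_single, map_smul,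
    LinearMap.smul_apply, smul_smul, ← pow_add, add_assoc]
  ring_nf

theorem muqR_one_left (x : AqR R) : muqR q (Finsupp.single (0, 0) 1) x = x := by
  suffices h : muqR q (Finsupp.single (0, 0) 1) = LinearMap.id from congr($h x)
  ext ⟨m, n⟩ : 2
  simp [muqR_single_single]

theorem muqR_one_right (x : AqR R) : muqR q x (Finsupp.single (0, 0) 1) = x := by
  suffices h : (muqR q).flip (Finsupp.single (0, 0) 1) = LinearMap.id from congr($h x)
  ext ⟨m, n⟩ : 2
  simp [muqR_single_single]

theorem muqR_induction {P : AqR R → Prop} (add : ∀ x y, P x → P y → P (x + y))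
    (smul : ∀ (c : R) x, P x → P (c • x)) (one : P (Finsupp.single (0, 0) 1))
    (gen_a : P (Finsupp.single (1, 0) 1)) (gen_abar : P (Finsupp.single (0, 1) 1))
    (mul : ∀ x y, P x → P y → P (muqR q x y)) (x : AqR R) : P x := by
  have abar_pow (l : ℕ) : P (Finsupp.single (0, l) 1) := by
    induction l with
    | zero => exact one
    | succ l ih => simpa [muqR_single_single, add_comm] using mul _ _ gen_abar ih
  have monomial (k l : ℕ) : P (Finsupp.single (k, l) 1) := by
    induction k with
    | zero => exact abar_pow l
    | succ k ih => simpa [muqR_single_single, add_comm] using mul _ _ gen_a ih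
  induction x using Finsupp.induction_linear with
  | zero => simpa using smul 0 _ one
  | add x y hx hy => exact add x y hx hy
  | single p c => simpa using smul c _ (monomial p.1 p.2)

end Aq

section Psiq

variable {R : Type*} [CommRing R] (q : R)

theorem psiqR_single_tmul_single (k l r : ℕ) :
    psiqR q (Finsupp.single (k, l) 1 ⊗ₜ AddMonoidAlgebra.single r 1) =
      ∑ i ∈ Finset.range (k + 1), (q ^ (l * r) * psiqCoeff q k r i) •
        ((AddMonoidAlgebra.single (r + i) 1 : BpolyR R) ⊗ₜ[R]
          (Finsupp.single (k - i, l + i) 1 : AqR R)) := by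
  rw [psiqR, TensorProduct.lift.tmul, Finsupp.lift_apply,
    Finsupp.sum_single_index (by simp), one_smul]
  rw [LinearMap.comp_apply, show (AddMonoidAlgebra.coeffLinearEquiv R).toLinearMap
      (AddMonoidAlgebra.single r (1 : R)) = Finsupp.single r 1 from rfl, Finsupp.lift_apply,
    Finsupp.sum_single_index (by simp), one_smul]
  simp only [psiqCoeff, mul_assoc]

theorem AqR.tensor_ext {M : Type*} [AddCommGroup M] [Module R M]
    {f g : AqR R ⊗[R] BpolyR R →ₗ[R] M}
    (h : ∀ k l r, f (Finsupp.single (k, l) 1 ⊗ₜ AddMonoidAlgebra.single r 1) =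
      g (Finsupp.single (k, l) 1 ⊗ₜ AddMonoidAlgebra.single r 1)) : f = g := by
  ext ⟨k, l⟩ r
  exact h k l r

theorem BpolyR.tensor_ext {M : Type*} [AddCommGroup M] [Module R M]
    {f g : BpolyR R ⊗[R] BpolyR R →ₗ[R] M}
    (h : ∀ r t, f (AddMonoidAlgebra.single r 1 ⊗ₜ AddMonoidAlgebra.single t 1) =
      g (AddMonoidAlgebra.single r 1 ⊗ₜ AddMonoidAlgebra.single t 1)) : f = g := by
  ext r t
  exact h r t

theorem psiqR_one_tmul (u : BpolyR R) :
    psiqR q (Finsupp.single (0, 0) 1 ⊗ₜ u) = u ⊗ₜ Finsupp.single (0, 0) 1 := by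
  suffices h : psiqR q ∘ₗ TensorProduct.mk R (AqR R) (BpolyR R) (Finsupp.single (0, 0) 1) =
      (TensorProduct.mk R (BpolyR R) (AqR R)).flip (Finsupp.single (0, 0) 1) from congr($h u)
  ext r : 2
  simp [psiqR_single_tmul_single]

theorem psiqR_tmul_one (x : AqR R) : psiqR q (x ⊗ₜ (1 : BpolyR R)) = (1 : BpolyR R) ⊗ₜ x := by
  suffices h : psiqR q ∘ₗ (TensorProduct.mk R (AqR R) (BpolyR R)).flip 1 =
      TensorProduct.mk R (BpolyR R) (AqR R) 1 from congr($h x)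
  ext ⟨k, l⟩ : 2
  rw [LinearMap.comp_apply, LinearMap.comp_apply, LinearMap.flip_apply, Finsupp.lsingle_apply,
    TensorProduct.mk_apply, AddMonoidAlgebra.one_def, psiqR_single_tmul_single,
    Finset.sum_range_succ']
  simp [psiqCoeff_zero_left]

theorem psiqR_abar_tmul (r : ℕ) :
    psiqR q (Finsupp.single (0, 1) 1 ⊗ₜ AddMonoidAlgebra.single r 1) =
      q ^ r • ((AddMonoidAlgebra.single r 1 : BpolyR R) ⊗ₜ[R]
        (Finsupp.single (0, 1) 1 : AqR R)) := by
  simp [psiqR_single_tmul_single]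

theorem psiqR_a_tmul (r : ℕ) :
    psiqR q (Finsupp.single (1, 0) 1 ⊗ₜ AddMonoidAlgebra.single r 1) =
      (AddMonoidAlgebra.single r 1 : BpolyR R) ⊗ₜ[R] (Finsupp.single (1, 0) 1 : AqR R) +
        (1 - q ^ r) • ((AddMonoidAlgebra.single (r + 1) 1 : BpolyR R) ⊗ₜ[R]
          (Finsupp.single (0, 1) 1 : AqR R)) := by
  have hcoeff : psiqCoeff q 1 r 1 = 1 - q ^ r := by
    simp [psiqCoeff, qPochhammer', qbinomR_succ_succ q 0 0, qbinomR_eq_zero_of_lt,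
      qbinomR_one_mul_one_sub]
  simp [psiqR_single_tmul_single, Finset.sum_range_succ, hcoeff]

end Psiq

section Generators

variable {R : Type*} [CommRing R] (q : R)

theorem respectsMulA_abar : RespectsMulA (muqR q) (psiqR q) (Finsupp.single (0, 1) 1) := by
  rw [respectsMulA_iff]
  refine AqR.tensor_ext fun m n r => ?_
  simp only [LinearMap.comp_apply, LinearMap.rTensor_tmul, TensorProduct.mk_apply,
    muqR_single_single, ← smul_tmul', map_smul, zero_add]
  rw [psiqR_single_tmul_single, psiqR_single_tmul_single]
  simp only [tmul_sum, tmul_smul, map_sum, map_smul, twL_tmul_tmul, psiqR_abar_tmul,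
    LinearMap.lTensor_tmul, LinearMap.flip_apply, muqR_single_single, Finset.smul_sum, smul_smul]
  refine Finset.sum_congr rfl fun i hi => ?_
  obtain ⟨d, rfl⟩ := Nat.exists_eq_add_of_le (Nat.lt_succ_iff.1 (Finset.mem_range.1 hi))
  simp only [Nat.add_sub_cancel_left]
  ring_nf

theorem respectsMulA_a : RespectsMulA (muqR q) (psiqR q) (Finsupp.single (1, 0) 1) := by
  rw [respectsMulA_iff]
  refine AqR.tensor_ext fun m n r => ?_
  let E (j : ℕ) : BpolyR R ⊗[R] AqR R :=
    AddMonoidAlgebra.single (r + j) 1 ⊗ₜ Finsupp.single (m + 1 - j, n + j) 1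
  have lhs : psiqR q (muqR q (Finsupp.single (1, 0) 1) (Finsupp.single (m, n) 1) ⊗ₜ
      AddMonoidAlgebra.single r 1) =
      ∑ j ∈ Finset.range (m + 1 + 1), (q ^ (n * r) * psiqCoeff q (m + 1) r j) • E j := by
    rw [muqR_single_single, ← smul_tmul', map_smul, psiqR_single_tmul_single]
    simp [E, add_comm 1 m]
  have rhs : twL (lift (muqR q)) (psiqR q) (Finsupp.single (1, 0) 1 ⊗ₜ
      psiqR q (Finsupp.single (m, n) 1 ⊗ₜ AddMonoidAlgebra.single r 1)) =
      ∑ i ∈ Finset.range (m + 1), ((q ^ (n * r) * psiqCoeff q m r i) • E i +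
        (q ^ (n * r) * (q ^ (m - i) * (1 - q ^ (r + i)) * psiqCoeff q m r i)) • E (i + 1)) := by
    rw [psiqR_single_tmul_single]
    simp only [tmul_sum, tmul_smul, map_sum, map_smul, twL_tmul_tmul, psiqR_a_tmul, map_add,
      LinearMap.lTensor_tmul, LinearMap.flip_apply, muqR_single_single]
    refine Finset.sum_congr rfl fun i hi => ?_
    obtain ⟨d, rfl⟩ := Nat.exists_eq_add_of_le (Nat.lt_succ_iff.1 (Finset.mem_range.1 hi))
    simp only [E, Nat.add_sub_cancel_left, smul_smul, zero_add, one_smul, pow_zero, zero_mul,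
      one_mul, show i + d + 1 - i = 1 + d by omega, show i + d + 1 - (i + 1) = d by omega,
      show 1 + (n + i) = n + (i + 1) by omega, show r + i + 1 = r + (i + 1) by omega]
    module
  have extend : ∑ i ∈ Finset.range (m + 1), (q ^ (n * r) * psiqCoeff q m r i) • E i =
      ∑ i ∈ Finset.range (m + 1 + 1), (q ^ (n * r) * psiqCoeff q m r i) • E i := by
    rw [Finset.sum_range_succ _ (m + 1), psiqCoeff_eq_zero_of_lt q r (Nat.lt_succ_self m),
      mul_zero, zero_smul, add_zero]
  simp only [LinearMap.comp_apply, LinearMap.rTensor_tmul, TensorProduct.mk_apply]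
  rw [lhs, rhs, Finset.sum_add_distrib, extend]
  simp only [Finset.sum_range_succ' _ (m + 1), psiqCoeff_zero_right]
  rw [add_right_comm, ← Finset.sum_add_distrib]
  congr 1
  refine Finset.sum_congr rfl fun i _ => ?_
  rw [← add_smul, psiqCoeff_succ_succ]
  ring_nf

theorem respectsMulB_abar : RespectsMulB (psiqR q) (Finsupp.single (0, 1) 1) := by
  rw [respectsMulB_iff]
  refine BpolyR.tensor_ext fun r t => ?_
  simp only [LinearMap.comp_apply, LinearMap.mul'_apply, TensorProduct.mk_apply,
    LinearMap.rTensor_tmul, AddMonoidAlgebra.single_mul_single, one_mul, psiqR_abar_tmul,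
    ← smul_tmul', map_smul, twR_tmul_tmul, LinearMap.mulLeft_apply, smul_smul, pow_add]

theorem respectsMulB_a : RespectsMulB (psiqR q) (Finsupp.single (1, 0) 1) := by
  rw [respectsMulB_iff]
  refine BpolyR.tensor_ext fun r t => ?_
  simp only [LinearMap.comp_apply, LinearMap.mul'_apply, TensorProduct.mk_apply,
    LinearMap.rTensor_tmul, AddMonoidAlgebra.single_mul_single, one_mul, psiqR_a_tmul,
    psiqR_abar_tmul, add_tmul, ← smul_tmul', map_add, map_smul, twR_tmul_tmul,
    LinearMap.mulLeft_apply, smul_smul, show r + 1 + t = r + t + 1 by omega,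
    show r + (t + 1) = r + t + 1 by omega]
  module

theorem respectsMulA_psiqR (x : AqR R) : RespectsMulA (muqR q) (psiqR q) x :=
  muqR_induction q (P := RespectsMulA (muqR q) (psiqR q)) (fun _ _ => RespectsMulA.add)
    (fun c _ => RespectsMulA.smul c)
    (respectsMulA_of_unit (muqR_one_left q) (psiqR_one_tmul q)) (respectsMulA_a q)
    (respectsMulA_abar q) (fun _ _ => RespectsMulA.mul (muqR_assoc q)) x

theorem respectsMulB_psiqR (x : AqR R) : RespectsMulB (psiqR q) x :=
  muqR_induction q (P := RespectsMulB (psiqR q)) (fun _ _ => RespectsMulB.add)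
    (fun c _ => RespectsMulB.smul c)
    (respectsMulB_of_unit (psiqR_one_tmul q)) (respectsMulB_a q) (respectsMulB_abar q)
    (fun _ _ => RespectsMulB.mul (respectsMulA_psiqR q)) x

end Generators

/-- Example 3.3, closed form of the deformed twisting. -/
theorem deformed_twisting_closed_form {R : Type*} [CommRing R] (q : R) :
    letI e : AqR R := Finsupp.single (0, 0) 1      -- the unit a⁰ā⁰ of A_q
    letI μA : AqR R ⊗[R] AqR R →ₗ[R] AqR R := TensorProduct.lift (muqR q)
    letI μB := LinearMap.mul' R (BpolyR R)
    letI ψ := psiqR q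
    -- A_q is an associative unital R-algebra
    (∀ x y z : AqR R, muqR q (muqR q x y) z = muqR q x (muqR q y z)) ∧
    (∀ x : AqR R, muqR q e x = x) ∧ (∀ x : AqR R, muqR q x e = x) ∧
    -- Ψ_q is a twisting map for A_q and B
    (∀ (x y : AqR R) (u : BpolyR R),
        ψ (muqR q x y ⊗ₜ[R] u) = twL μA ψ (x ⊗ₜ[R] ψ (y ⊗ₜ[R] u))) ∧
    (∀ (x : AqR R) (u v : BpolyR R),
        ψ (x ⊗ₜ[R] (u * v)) = twR μB ψ (ψ (x ⊗ₜ[R] u) ⊗ₜ[R] v)) ∧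
    (∀ u : BpolyR R, ψ (e ⊗ₜ[R] u) = u ⊗ₜ[R] e) ∧
    (∀ x : AqR R, ψ (x ⊗ₜ[R] (1 : BpolyR R)) = (1 : BpolyR R) ⊗ₜ[R] x) := by
  exact ⟨muqR_assoc q, muqR_one_left q, muqR_one_right q, respectsMulA_psiqR q,
    respectsMulB_psiqR q, psiqR_one_tmul q, psiqR_tmul_one q⟩
end

section
/- (Example 3.5, dim H²(ℍ(ℂ,ℂ)) = 1.) Let A = B = ℂ as ℝ-algebras and let Ψ : ℂ⊗_ℝℂ → ℂ⊗_ℝℂ be the ℝ-linear map determined on the basis {1, i} by Ψ(1⊗1) = 1⊗1, Ψ(1⊗i) = i⊗1, Ψ(i⊗1) = 1⊗i, Ψ(i⊗i) = −(i⊗i) (a twisting map whose twisted tensor product is the quaternions). Let E : ℂ⊗_ℝℂ → ℂ⊗_ℝℂ be the ℝ-linear map with E(i⊗i) = 1⊗1 and E(1⊗1) = E(1⊗i) = E(i⊗1) = 0. Then for every triple of ℝ-linear maps μ_A^{(1)} : ℂ⊗_ℝℂ → ℂ, Ψ^{(1)} : ℂ⊗_ℝℂ → ℂ⊗_ℝℂ,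 μ_B^{(1)} : ℂ⊗_ℝℂ → ℂ satisfying the 2-cocycle conditions (E1)–(E4) with respect to this Ψ, there exist a unique λ ∈ ℝ and ℝ-linear maps α, β : ℂ → ℂ such that μ_A^{(1)}(x⊗y) = x·α(y) − α(x·y) + α(x)·y, μ_B^{(1)}(x⊗y) = x·β(y) − β(x·y) + β(x)·y, and Ψ^{(1)} = λ·E + Ψ∘(id⊗β) − (β⊗id)∘Ψ + Ψ∘(α⊗id) − (id⊗α)∘Ψ. -/
set_option synthInstance.maxHeartbeats 1000000
set_option maxHeartbeats 4000000

open TensorProduct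

namespace QSC

open Complex

@[simp] theorem cmk_re (x y : ℝ) : (⟨x, y⟩ : ℂ).re = x := rfl
@[simp] theorem cmk_im (x y : ℝ) : (⟨x, y⟩ : ℂ).im = y := rfl

theorem tmul_decomp (z w : ℂ) : z ⊗ₜ[ℝ] w
    = (z.re*w.re) • ((1:ℂ) ⊗ₜ[ℝ] (1:ℂ)) + (z.re*w.im) • ((1:ℂ) ⊗ₜ[ℝ] I)
      + (z.im*w.re) • (I ⊗ₜ[ℝ] (1:ℂ)) + (z.im*w.im) • (I ⊗ₜ[ℝ] I) := by
  conv_lhs => rw [show z = z.re • 1 + z.im • I by simp [Complex.real_smul],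
    show w = w.re • 1 + w.im • I by simp [Complex.real_smul]]
  simp only [add_tmul, tmul_add, smul_tmul, tmul_smul, smul_smul]
  module

noncomputable def co (f g : ℂ →ₗ[ℝ] ℝ) : ℂ ⊗[ℝ] ℂ →ₗ[ℝ] ℝ :=
  (TensorProduct.lid ℝ ℝ).toLinearMap ∘ₗ TensorProduct.map f g

noncomputable def c00 := co Complex.reLm Complex.reLm
noncomputable def c01 := co Complex.reLm Complex.imLm
noncomputable def c10 := co Complex.imLm Complex.reLm
noncomputable def c11 := co Complex.imLm Complex.imLm

@[simp] theorem c00_tmul (z w : ℂ) : c00 (z ⊗ₜ[ℝ] w) = z.re * w.re := by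
  simp [c00, co, smul_eq_mul]
@[simp] theorem c01_tmul (z w : ℂ) : c01 (z ⊗ₜ[ℝ] w) = z.re * w.im := by
  simp [c01, co, smul_eq_mul]
@[simp] theorem c10_tmul (z w : ℂ) : c10 (z ⊗ₜ[ℝ] w) = z.im * w.re := by
  simp [c10, co, smul_eq_mul]
@[simp] theorem c11_tmul (z w : ℂ) : c11 (z ⊗ₜ[ℝ] w) = z.im * w.im := by
  simp [c11, co, smul_eq_mul]

noncomputable def mkL (u v : ℂ) : ℂ →ₗ[ℝ] ℂ where
  toFun z := z.re • u + z.im • v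
  map_add' z w := by simp [add_smul]; abel
  map_smul' r z := by simp [Complex.smul_re, Complex.smul_im, mul_smul, smul_add]

@[simp] theorem mkL_apply (u v z : ℂ) : mkL u v z = z.re • u + z.im • v := rfl

noncomputable def rmul (μ : ℂ ⊗[ℝ] ℂ →ₗ[ℝ] ℂ) (v : ℂ) : ℂ →ₗ[ℝ] ℂ :=
  μ ∘ₗ (TensorProduct.mk ℝ ℂ ℂ).flip v

noncomputable def lmul (ν : ℂ ⊗[ℝ] ℂ →ₗ[ℝ] ℂ) (u : ℂ) : ℂ →ₗ[ℝ] ℂ :=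
  ν ∘ₗ TensorProduct.mk ℝ ℂ ℂ u

@[simp] theorem rmul_apply (μ : ℂ ⊗[ℝ] ℂ →ₗ[ℝ] ℂ) (v x : ℂ) : rmul μ v x = μ (x ⊗ₜ[ℝ] v) := rfl
@[simp] theorem lmul_apply (ν : ℂ ⊗[ℝ] ℂ →ₗ[ℝ] ℂ) (u x : ℂ) : lmul ν u x = ν (u ⊗ₜ[ℝ] x) := rfl

theorem twL_eq (μ : ℂ ⊗[ℝ] ℂ →ₗ[ℝ] ℂ) (ψ : ℂ ⊗[ℝ] ℂ →ₗ[ℝ] ℂ ⊗[ℝ] ℂ) (x u v : ℂ) :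
    twL μ ψ (x ⊗ₜ[ℝ] (u ⊗ₜ[ℝ] v)) = LinearMap.lTensor ℂ (rmul μ v) (ψ (x ⊗ₜ[ℝ] u)) := by
  unfold twL
  simp only [LinearMap.comp_apply, LinearEquiv.coe_coe, TensorProduct.assoc_symm_tmul,
    LinearMap.rTensor_tmul]
  induction ψ (x ⊗ₜ[ℝ] u) using TensorProduct.induction_on with
  | zero => simp
  | tmul b a => simp
  | add s t hs ht => simp only [add_tmul, map_add, hs, ht]

theorem twR_eq (ν : ℂ ⊗[ℝ] ℂ →ₗ[ℝ] ℂ) (ψ : ℂ ⊗[ℝ] ℂ →ₗ[ℝ] ℂ ⊗[ℝ] ℂ) (u v w : ℂ) :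
    twR ν ψ ((u ⊗ₜ[ℝ] v) ⊗ₜ[ℝ] w) = LinearMap.rTensor ℂ (lmul ν u) (ψ (v ⊗ₜ[ℝ] w)) := by
  unfold twR
  simp only [LinearMap.comp_apply, LinearEquiv.coe_coe, TensorProduct.assoc_tmul,
    LinearMap.lTensor_tmul]
  induction ψ (v ⊗ₜ[ℝ] w) using TensorProduct.induction_on with
  | zero => simp
  | tmul b a => simp
  | add s t hs ht => simp only [tmul_add, map_add, hs, ht]

theorem decompc (t : ℂ ⊗[ℝ] ℂ) :
    t = c00 t • ((1:ℂ) ⊗ₜ[ℝ] (1:ℂ)) + c01 t • ((1:ℂ) ⊗ₜ[ℝ] I)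
      + c10 t • (I ⊗ₜ[ℝ] (1:ℂ)) + c11 t • (I ⊗ₜ[ℝ] I) := by
  induction t using TensorProduct.induction_on with
  | zero => simp
  | tmul z w => rw [tmul_decomp z w]; simp
  | add s t hs ht =>
    conv_lhs => rw [hs, ht]
    simp only [map_add, add_smul]
    abel

theorem decomp (t : ℂ ⊗[ℝ] ℂ) : ∃ A B C D : ℝ,
    t = A • ((1:ℂ) ⊗ₜ[ℝ] (1:ℂ)) + B • ((1:ℂ) ⊗ₜ[ℝ] I)
      + C • (I ⊗ₜ[ℝ] (1:ℂ)) + D • (I ⊗ₜ[ℝ] I) :=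
  ⟨_, _, _, _, decompc t⟩

theorem tensor_ext {t s : ℂ ⊗[ℝ] ℂ} (h0 : c00 t = c00 s) (h1 : c01 t = c01 s)
    (h2 : c10 t = c10 s) (h3 : c11 t = c11 s) : t = s := by
  rw [decompc t, decompc s, h0, h1, h2, h3]

end QSC

/-- The twisting map `Ψ : ℂ ⊗_ℝ ℂ → ℂ ⊗_ℝ ℂ` with `Ψ(1⊗1) = 1⊗1`,
`Ψ(1⊗i) = i⊗1`, `Ψ(i⊗1) = 1⊗i`, `Ψ(i⊗i) = −(i⊗i)` (whose twisted tensor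
product is the quaternions), as a bilinear map. -/
noncomputable def psiHbil : ℂ →ₗ[ℝ] ℂ →ₗ[ℝ] ℂ ⊗[ℝ] ℂ :=
  LinearMap.mk₂ ℝ
    (fun z w => (z.re * w.re) • ((1 : ℂ) ⊗ₜ[ℝ] (1 : ℂ))
      + (z.re * w.im) • (Complex.I ⊗ₜ[ℝ] (1 : ℂ))
      + (z.im * w.re) • ((1 : ℂ) ⊗ₜ[ℝ] Complex.I)
      - (z.im * w.im) • (Complex.I ⊗ₜ[ℝ] Complex.I))
    (by intros; simp [add_mul, add_smul]; abel)
    (by intros; simp [smul_smul, mul_assoc, smul_sub, smul_add, mul_left_comm])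
    (by intros; simp [mul_add, add_smul]; abel)
    (by intros; simp [smul_smul, smul_sub, smul_add, mul_left_comm])

/-- `Ψ` as a linear map on the tensor product. -/
noncomputable def psiH : ℂ ⊗[ℝ] ℂ →ₗ[ℝ] ℂ ⊗[ℝ] ℂ := TensorProduct.lift psiHbil

/-- The map `E : ℂ ⊗_ℝ ℂ → ℂ ⊗_ℝ ℂ` with `E(i⊗i) = 1⊗1`,
`E(1⊗1) = E(1⊗i) = E(i⊗1) = 0`. -/
noncomputable def eH : ℂ ⊗[ℝ] ℂ →ₗ[ℝ] ℂ ⊗[ℝ] ℂ :=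
  TensorProduct.lift <| LinearMap.mk₂ ℝ
    (fun z w => (z.im * w.im) • ((1 : ℂ) ⊗ₜ[ℝ] (1 : ℂ)))
    (by intros; simp [add_mul, add_smul])
    (by intros; simp [smul_smul, mul_assoc])
    (by intros; simp [mul_add, add_smul])
    (by intros; simp [smul_smul, mul_left_comm])


open QSC in
theorem psiH_tmul (z w : ℂ) : psiH (z ⊗ₜ[ℝ] w)
    = (z.re * w.re) • ((1 : ℂ) ⊗ₜ[ℝ] (1 : ℂ))
      + (z.re * w.im) • (Complex.I ⊗ₜ[ℝ] (1 : ℂ))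
      + (z.im * w.re) • ((1 : ℂ) ⊗ₜ[ℝ] Complex.I)
      - (z.im * w.im) • (Complex.I ⊗ₜ[ℝ] Complex.I) := by
  simp [psiH, psiHbil]

theorem eH_tmul (z w : ℂ) :
    eH (z ⊗ₜ[ℝ] w) = (z.im * w.im) • ((1 : ℂ) ⊗ₜ[ℝ] (1 : ℂ)) := by
  simp [eH]

theorem psiH_11 : psiH ((1:ℂ) ⊗ₜ[ℝ] (1:ℂ)) = (1:ℂ) ⊗ₜ[ℝ] (1:ℂ) := by simp [psiH_tmul]

/-- Example 3.5: every 2-cocycle for the factorisation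
`ℍ(ℂ,ℂ)` is cohomologous to `λ·E` for a unique `λ ∈ ℝ`;
i.e. `dim H²(ℍ(ℂ,ℂ)) = 1` with generator `E`. -/
theorem quaternion_second_cohomology
    (μa1 : ℂ ⊗[ℝ] ℂ →ₗ[ℝ] ℂ) (ψ1 : ℂ ⊗[ℝ] ℂ →ₗ[ℝ] ℂ ⊗[ℝ] ℂ)
    (μb1 : ℂ ⊗[ℝ] ℂ →ₗ[ℝ] ℂ)
    -- (E1)
    (hE1 : ∀ x y z : ℂ,
      x * μa1 (y ⊗ₜ[ℝ] z) - μa1 ((x * y) ⊗ₜ[ℝ] z)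
        + μa1 (x ⊗ₜ[ℝ] (y * z)) - μa1 (x ⊗ₜ[ℝ] y) * z = 0)
    -- (E2)
    (hE2 : ∀ x y z : ℂ,
      x * μb1 (y ⊗ₜ[ℝ] z) - μb1 ((x * y) ⊗ₜ[ℝ] z)
        + μb1 (x ⊗ₜ[ℝ] (y * z)) - μb1 (x ⊗ₜ[ℝ] y) * z = 0)
    -- (E3)
    (hE3 : ∀ (x y : ℂ) (w : ℂ),
      twL (LinearMap.mul' ℝ ℂ) ψ1 (x ⊗ₜ[ℝ] psiH (y ⊗ₜ[ℝ] w))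
        + twL (LinearMap.mul' ℝ ℂ) psiH (x ⊗ₜ[ℝ] ψ1 (y ⊗ₜ[ℝ] w))
        + twL μa1 psiH (x ⊗ₜ[ℝ] psiH (y ⊗ₜ[ℝ] w))
      = ψ1 ((x * y) ⊗ₜ[ℝ] w) + psiH (μa1 (x ⊗ₜ[ℝ] y) ⊗ₜ[ℝ] w))
    -- (E4)
    (hE4 : ∀ (x : ℂ) (w w' : ℂ),
      twR (LinearMap.mul' ℝ ℂ) ψ1 (psiH (x ⊗ₜ[ℝ] w) ⊗ₜ[ℝ] w')
        + twR (LinearMap.mul' ℝ ℂ) psiH (ψ1 (x ⊗ₜ[ℝ] w) ⊗ₜ[ℝ] w')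
        + twR μb1 psiH (psiH (x ⊗ₜ[ℝ] w) ⊗ₜ[ℝ] w')
      = ψ1 (x ⊗ₜ[ℝ] (w * w')) + psiH (x ⊗ₜ[ℝ] μb1 (w ⊗ₜ[ℝ] w'))) :
    ∃! l : ℝ, ∃ α β : ℂ →ₗ[ℝ] ℂ,
      (∀ x y : ℂ, μa1 (x ⊗ₜ[ℝ] y) = x * α y - α (x * y) + α x * y) ∧
      (∀ x y : ℂ, μb1 (x ⊗ₜ[ℝ] y) = x * β y - β (x * y) + β x * y) ∧
      (∀ z w : ℂ,
        ψ1 (z ⊗ₜ[ℝ] w)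
          = l • eH (z ⊗ₜ[ℝ] w)
            + psiH (z ⊗ₜ[ℝ] β w)
            - TensorProduct.map β LinearMap.id (psiH (z ⊗ₜ[ℝ] w))
            + psiH (α z ⊗ₜ[ℝ] w)
            - TensorProduct.map LinearMap.id α (psiH (z ⊗ₜ[ℝ] w))) := by
  classical
  have h1ia : μa1 ((1:ℂ) ⊗ₜ[ℝ] Complex.I) = μa1 ((1:ℂ) ⊗ₜ[ℝ] (1:ℂ)) * Complex.I := by
    have h := hE1 1 1 Complex.I
    simp only [one_mul, mul_one] at h
    linear_combination h
  have hi1a : μa1 (Complex.I ⊗ₜ[ℝ] (1:ℂ)) = Complex.I * μa1 ((1:ℂ) ⊗ₜ[ℝ] (1:ℂ)) := by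
    have h := hE1 Complex.I 1 1
    simp only [one_mul, mul_one] at h
    linear_combination -h
  have h1ib : μb1 ((1:ℂ) ⊗ₜ[ℝ] Complex.I) = μb1 ((1:ℂ) ⊗ₜ[ℝ] (1:ℂ)) * Complex.I := by
    have h := hE2 1 1 Complex.I
    simp only [one_mul, mul_one] at h
    linear_combination h
  have hi1b : μb1 (Complex.I ⊗ₜ[ℝ] (1:ℂ)) = Complex.I * μb1 ((1:ℂ) ⊗ₜ[ℝ] (1:ℂ)) := by
    have h := hE2 Complex.I 1 1
    simp only [one_mul, mul_one] at h
    linear_combination -h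
  obtain ⟨A0, B0, C0, D0, hd0⟩ := QSC.decomp (ψ1 ((1:ℂ) ⊗ₜ[ℝ] (1:ℂ)))
  have hv1 : ψ1 ((1:ℂ) ⊗ₜ[ℝ] (1:ℂ)) = 0 := by
    have h := hE3 1 1 1
    rw [one_mul] at h
    simp only [hd0, tmul_add, tmul_sub, tmul_smul, tmul_neg, add_tmul, sub_tmul, smul_tmul, neg_tmul,
      map_add, map_sub, map_neg, map_smul, map_zero, QSC.twL_eq, QSC.twR_eq, psiH_tmul,
      LinearMap.lTensor_tmul, LinearMap.rTensor_tmul, QSC.rmul_apply, QSC.lmul_apply,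
      LinearMap.mul'_apply, Complex.I_mul_I, mul_one, one_mul, mul_zero, zero_mul, zero_smul,
      one_smul, smul_zero, smul_neg, neg_neg, add_zero, zero_add, sub_zero, zero_sub, neg_zero,
      Complex.one_re, Complex.one_im, Complex.I_re, Complex.I_im] at h
    have e00 := congrArg QSC.c00 h
    have e01 := congrArg QSC.c01 h
    have e10 := congrArg QSC.c10 h
    have e11 := congrArg QSC.c11 h
    simp only [map_add, map_sub, map_neg, map_smul, map_zero, QSC.c00_tmul, QSC.c01_tmul,
      QSC.c10_tmul, QSC.c11_tmul, smul_eq_mul, Complex.one_re, Complex.one_im, Complex.I_re,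
      Complex.I_im, Complex.mul_re, Complex.mul_im, mul_zero, zero_mul, mul_one, one_mul,
      add_zero, zero_add, sub_zero, zero_sub, neg_zero, neg_neg, mul_neg, neg_mul] at e00 e01 e10 e11
    rw [hd0, show A0 = 0 by linarith, show B0 = 0 by linarith, show C0 = 0 by linarith,
      show D0 = 0 by linarith]
    simp
  obtain ⟨A1, B1, C1, D1, hd1⟩ := QSC.decomp (ψ1 ((1:ℂ) ⊗ₜ[ℝ] Complex.I))
  have hv2 : ψ1 ((1:ℂ) ⊗ₜ[ℝ] Complex.I)
      = (-2 * (μa1 ((1:ℂ) ⊗ₜ[ℝ] (1:ℂ))).im) • (Complex.I ⊗ₜ[ℝ] Complex.I) := by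
    have h := hE3 1 1 Complex.I
    rw [one_mul] at h
    simp only [hd1, tmul_add, tmul_sub, tmul_smul, tmul_neg, add_tmul, sub_tmul, smul_tmul, neg_tmul,
      map_add, map_sub, map_neg, map_smul, map_zero, QSC.twL_eq, QSC.twR_eq, psiH_tmul,
      LinearMap.lTensor_tmul, LinearMap.rTensor_tmul, QSC.rmul_apply, QSC.lmul_apply,
      LinearMap.mul'_apply, Complex.I_mul_I, mul_one, one_mul, mul_zero, zero_mul, zero_smul,
      one_smul, smul_zero, smul_neg, neg_neg, add_zero, zero_add, sub_zero, zero_sub, neg_zero,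
      Complex.one_re, Complex.one_im, Complex.I_re, Complex.I_im] at h
    have e00 := congrArg QSC.c00 h
    have e01 := congrArg QSC.c01 h
    have e10 := congrArg QSC.c10 h
    have e11 := congrArg QSC.c11 h
    simp only [map_add, map_sub, map_neg, map_smul, map_zero, QSC.c00_tmul, QSC.c01_tmul,
      QSC.c10_tmul, QSC.c11_tmul, smul_eq_mul, Complex.one_re, Complex.one_im, Complex.I_re,
      Complex.I_im, Complex.mul_re, Complex.mul_im, mul_zero, zero_mul, mul_one, one_mul,
      add_zero, zero_add, sub_zero, zero_sub, neg_zero, neg_neg, mul_neg, neg_mul] at e00 e01 e10 e11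
    rw [hd1, show A1 = 0 by linarith, show B1 = 0 by linarith, show C1 = 0 by linarith,
      show D1 = -2 * (μa1 ((1:ℂ) ⊗ₜ[ℝ] (1:ℂ))).im by linarith]
    simp
  obtain ⟨A2, B2, C2, D2, hd2⟩ := QSC.decomp (ψ1 (Complex.I ⊗ₜ[ℝ] (1:ℂ)))
  have hv3 : ψ1 (Complex.I ⊗ₜ[ℝ] (1:ℂ))
      = (-2 * (μb1 ((1:ℂ) ⊗ₜ[ℝ] (1:ℂ))).im) • (Complex.I ⊗ₜ[ℝ] Complex.I) := by
    have h := hE4 Complex.I 1 1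
    rw [mul_one] at h
    simp only [hd2, tmul_add, tmul_sub, tmul_smul, tmul_neg, add_tmul, sub_tmul, smul_tmul, neg_tmul,
      map_add, map_sub, map_neg, map_smul, map_zero, QSC.twL_eq, QSC.twR_eq, psiH_tmul,
      LinearMap.lTensor_tmul, LinearMap.rTensor_tmul, QSC.rmul_apply, QSC.lmul_apply,
      LinearMap.mul'_apply, Complex.I_mul_I, mul_one, one_mul, mul_zero, zero_mul, zero_smul,
      one_smul, smul_zero, smul_neg, neg_neg, add_zero, zero_add, sub_zero, zero_sub, neg_zero,
      Complex.one_re, Complex.one_im, Complex.I_re, Complex.I_im] at h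
    have e00 := congrArg QSC.c00 h
    have e01 := congrArg QSC.c01 h
    have e10 := congrArg QSC.c10 h
    have e11 := congrArg QSC.c11 h
    simp only [map_add, map_sub, map_neg, map_smul, map_zero, QSC.c00_tmul, QSC.c01_tmul,
      QSC.c10_tmul, QSC.c11_tmul, smul_eq_mul, Complex.one_re, Complex.one_im, Complex.I_re,
      Complex.I_im, Complex.mul_re, Complex.mul_im, mul_zero, zero_mul, mul_one, one_mul,
      add_zero, zero_add, sub_zero, zero_sub, neg_zero, neg_neg, mul_neg, neg_mul] at e00 e01 e10 e11
    rw [hd2, show A2 = 0 by linarith, show B2 = 0 by linarith, show C2 = 0 by linarith,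
      show D2 = -2 * (μb1 ((1:ℂ) ⊗ₜ[ℝ] (1:ℂ))).im by linarith]
    simp
  obtain ⟨A4, B4, C4, D4, hd4⟩ := QSC.decomp (ψ1 (Complex.I ⊗ₜ[ℝ] Complex.I))
  have h3 := hE3 Complex.I Complex.I Complex.I
  have h4 := hE4 Complex.I Complex.I Complex.I
  rw [Complex.I_mul_I] at h3 h4
  simp only [hd4, hv2, hv3, tmul_add, tmul_sub, tmul_smul, tmul_neg, add_tmul, sub_tmul, smul_tmul, neg_tmul,
      map_add, map_sub, map_neg, map_smul, map_zero, QSC.twL_eq, QSC.twR_eq, psiH_tmul,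
      LinearMap.lTensor_tmul, LinearMap.rTensor_tmul, QSC.rmul_apply, QSC.lmul_apply,
      LinearMap.mul'_apply, Complex.I_mul_I, mul_one, one_mul, mul_zero, zero_mul, zero_smul,
      one_smul, smul_zero, smul_neg, neg_neg, add_zero, zero_add, sub_zero, zero_sub, neg_zero,
      Complex.one_re, Complex.one_im, Complex.I_re, Complex.I_im] at h3 h4
  have e300 := congrArg QSC.c00 h3
  have e301 := congrArg QSC.c01 h3
  have e310 := congrArg QSC.c10 h3
  have e311 := congrArg QSC.c11 h3
  have e400 := congrArg QSC.c00 h4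
  have e401 := congrArg QSC.c01 h4
  have e410 := congrArg QSC.c10 h4
  have e411 := congrArg QSC.c11 h4
  simp only [map_add, map_sub, map_neg, map_smul, map_zero, QSC.c00_tmul, QSC.c01_tmul,
      QSC.c10_tmul, QSC.c11_tmul, smul_eq_mul, Complex.one_re, Complex.one_im, Complex.I_re,
      Complex.I_im, Complex.mul_re, Complex.mul_im, mul_zero, zero_mul, mul_one, one_mul,
      add_zero, zero_add, sub_zero, zero_sub, neg_zero, neg_neg, mul_neg, neg_mul] at e300 e301 e310 e311 e400 e401 e410 e411
  have hv4 : ψ1 (Complex.I ⊗ₜ[ℝ] Complex.I)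
      = A4 • ((1:ℂ) ⊗ₜ[ℝ] (1:ℂ))
        + ((μb1 (Complex.I ⊗ₜ[ℝ] Complex.I)).im - (μb1 ((1:ℂ) ⊗ₜ[ℝ] (1:ℂ))).im)
            • ((1:ℂ) ⊗ₜ[ℝ] Complex.I)
        + ((μa1 (Complex.I ⊗ₜ[ℝ] Complex.I)).im - (μa1 ((1:ℂ) ⊗ₜ[ℝ] (1:ℂ))).im)
            • (Complex.I ⊗ₜ[ℝ] (1:ℂ)) := by
    rw [hd4,
      show B4 = (μb1 (Complex.I ⊗ₜ[ℝ] Complex.I)).im - (μb1 ((1:ℂ) ⊗ₜ[ℝ] (1:ℂ))).im by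
        linarith,
      show C4 = (μa1 (Complex.I ⊗ₜ[ℝ] Complex.I)).im - (μa1 ((1:ℂ) ⊗ₜ[ℝ] (1:ℂ))).im by
        linarith,
      show D4 = 0 by linarith]
    simp
  refine ⟨A4,
    ⟨QSC.mkL (μa1 ((1:ℂ) ⊗ₜ[ℝ] (1:ℂ)))
        ⟨((μa1 (Complex.I ⊗ₜ[ℝ] Complex.I)).im - (μa1 ((1:ℂ) ⊗ₜ[ℝ] (1:ℂ))).im)/2,
         ((μa1 ((1:ℂ) ⊗ₜ[ℝ] (1:ℂ))).re - (μa1 (Complex.I ⊗ₜ[ℝ] Complex.I)).re)/2⟩,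
     QSC.mkL (μb1 ((1:ℂ) ⊗ₜ[ℝ] (1:ℂ)))
        ⟨((μb1 (Complex.I ⊗ₜ[ℝ] Complex.I)).im - (μb1 ((1:ℂ) ⊗ₜ[ℝ] (1:ℂ))).im)/2,
         ((μb1 ((1:ℂ) ⊗ₜ[ℝ] (1:ℂ))).re - (μb1 (Complex.I ⊗ₜ[ℝ] Complex.I)).re)/2⟩,
     ?_, ?_, ?_⟩, ?_⟩
  · intro x y
    rw [QSC.tmul_decomp x y]
    simp only [map_add, map_smul, h1ia, hi1a, QSC.mkL_apply]
    apply Complex.ext <;>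
      simp [Complex.mul_re, Complex.mul_im, Complex.add_re, Complex.add_im, Complex.sub_re,
        Complex.sub_im, Complex.smul_re, Complex.smul_im] <;> ring
  · intro x y
    rw [QSC.tmul_decomp x y]
    simp only [map_add, map_smul, h1ib, hi1b, QSC.mkL_apply]
    apply Complex.ext <;>
      simp [Complex.mul_re, Complex.mul_im, Complex.add_re, Complex.add_im, Complex.sub_re,
        Complex.sub_im, Complex.smul_re, Complex.smul_im] <;> ring
  · intro z w
    rw [QSC.tmul_decomp z w]
    refine QSC.tensor_ext ?_ ?_ ?_ ?_ <;>
      simp [map_add, map_sub, map_neg, map_smul, hv1, hv2, hv3, hv4, psiH_tmul, eH_tmul,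
        TensorProduct.map_tmul, LinearMap.id_coe, id_eq, QSC.mkL_apply, smul_eq_mul,
        Complex.add_re, Complex.add_im, Complex.smul_re, Complex.smul_im, Complex.mul_re,
        Complex.mul_im] <;> ring
  · rintro l' ⟨α', β', -, -, h3'⟩
    have h := congrArg QSC.c00 (h3' Complex.I Complex.I)
    simp only [hv4, map_add, map_sub, map_neg, map_smul, psiH_tmul, eH_tmul,
      TensorProduct.map_tmul, LinearMap.id_coe, id_eq, smul_eq_mul, QSC.c00_tmul, QSC.c01_tmul,
      QSC.c10_tmul, QSC.c11_tmul, Complex.one_re, Complex.one_im, Complex.I_re, Complex.I_im,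
      mul_zero, zero_mul, mul_one, one_mul, add_zero, zero_add, sub_zero, zero_sub, neg_zero,
      neg_neg, mul_neg, neg_mul] at h
    linarith
end

section
/- (Example 3.5, deformed quaternions.) Let t ∈ ℝ. Let F be the free associative ℝ-algebra on two generators i, j, and let I be the two-sided ideal of F generated by i² + 1, j² + 1, and i·j + j·i − t. Then the images in F/I of the elements 1, i, j, i·j form an ℝ-vector space basis of F/I; in particular F/I is 4-dimensional over ℝ. -/
/-!
The relations rewrite `j·i` as `t - i·j` and `i², j²` as `-1`, so left multiplication by either
generator keeps the span of `1, i, j, i·j`; containing `1`, that span is everything. For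
independence, map to the quaternion algebra `ℍ[ℝ, -1, t²/4 - 1]`, where the images of the four
elements are unitriangular in the standard basis.
-/

open FreeAlgebra

/-- The free associative `ℝ`-algebra on two generators `i, j`. -/
abbrev F2 : Type := FreeAlgebra ℝ (Fin 2)

/-- The relations `i² + 1 = 0`, `j² + 1 = 0`, `i·j + j·i − t = 0`
(quotienting `F2` by `QRel t` is exactly quotienting by the two-sided ideal
generated by `i² + 1`, `j² + 1`, `i·j + j·i − t`). -/
inductive QRel (t : ℝ) : F2 → F2 → Prop
  | rel1 : QRel t (ι ℝ 0 * ι ℝ 0) (-1)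
  | rel2 : QRel t (ι ℝ 1 * ι ℝ 1) (-1)
  | rel3 : QRel t (ι ℝ 0 * ι ℝ 1 + ι ℝ 1 * ι ℝ 0) (algebraMap ℝ F2 t)

open Submodule Set RingQuot Quaternion

theorem Submodule.span_range_eq_top_of_mul_mem {R A ι : Type*} [CommSemiring R] [Semiring A]
    [Algebra R A] {s : Set A} (hs : Algebra.adjoin R s = ⊤) (v : ι → A)
    (h1 : (1 : A) ∈ span R (range v)) (hmul : ∀ x ∈ s, ∀ k, x * v k ∈ span R (range v)) :
    span R (range v) = ⊤ := by
  set M := span R (range v)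
  have gen_mul_mem : ∀ x ∈ s, ∀ m ∈ M, x * m ∈ M := by
    intro x hx m hm
    induction hm using Submodule.span_induction with
    | mem m hm => obtain ⟨k, rfl⟩ := hm; exact hmul x hx k
    | zero => rw [mul_zero]; exact M.zero_mem
    | add m n _ _ hm hn => rw [mul_add]; exact M.add_mem hm hn
    | smul r m _ hm => rw [mul_smul_comm]; exact M.smul_mem r hm
  have adjoin_mul_mem : ∀ a ∈ Algebra.adjoin R s, ∀ m ∈ M, a * m ∈ M := by
    intro a ha
    induction ha using Algebra.adjoin_induction with
    | mem x hx => exact gen_mul_mem x hx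
    | algebraMap r => intro m hm; rw [← Algebra.smul_def]; exact M.smul_mem r hm
    | add a b _ _ ha hb => intro m hm; rw [add_mul]; exact M.add_mem (ha m hm) (hb m hm)
    | mul a b _ _ ha hb => intro m hm; rw [mul_assoc]; exact ha _ (hb m hm)
  refine eq_top_iff.2 fun a _ => ?_
  simpa using adjoin_mul_mem a (hs ▸ Algebra.mem_top) 1 h1

theorem RingQuot.adjoin_range_mkAlgHom_ι {R X : Type*} [CommSemiring R]
    (r : FreeAlgebra R X → FreeAlgebra R X → Prop) :
    Algebra.adjoin R (range (mkAlgHom R r ∘ ι R)) = ⊤ := by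
  rw [range_comp, Algebra.adjoin_image, FreeAlgebra.adjoin_range_ι, Algebra.map_top,
    AlgHom.range_eq_top]
  exact mkAlgHom_surjective R r

namespace QRel

variable {t : ℝ}

theorem mkAlgHom_ι_zero_mul_self :
    mkAlgHom ℝ (QRel t) (ι ℝ 0) * mkAlgHom ℝ (QRel t) (ι ℝ 0) = -1 := by
  rw [← map_mul, mkAlgHom_rel ℝ rel1, map_neg, map_one]

theorem mkAlgHom_ι_one_mul_self :
    mkAlgHom ℝ (QRel t) (ι ℝ 1) * mkAlgHom ℝ (QRel t) (ι ℝ 1) = -1 := by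
  rw [← map_mul, mkAlgHom_rel ℝ rel2, map_neg, map_one]

theorem mkAlgHom_ι_one_mul_ι_zero :
    mkAlgHom ℝ (QRel t) (ι ℝ 1) * mkAlgHom ℝ (QRel t) (ι ℝ 0) =
      t • 1 - mkAlgHom ℝ (QRel t) (ι ℝ 0) * mkAlgHom ℝ (QRel t) (ι ℝ 1) := by
  rw [eq_sub_iff_add_eq', ← map_mul, ← map_mul, ← map_add, mkAlgHom_rel ℝ rel3,
    AlgHom.commutes, Algebra.algebraMap_eq_smul_one]

-- `exact`, not `rw [neg_one_mul]`: `RingQuot` is built on the `Semiring` of `FreeAlgebra`, which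
-- agrees with the one underlying its `Ring` only up to unfolding, so the rewrite does not fire.
theorem mkAlgHom_ι_zero_mul_mkAlgHom_ι_zero_mul (x : RingQuot (QRel t)) :
    mkAlgHom ℝ (QRel t) (ι ℝ 0) * (mkAlgHom ℝ (QRel t) (ι ℝ 0) * x) = -x := by
  rw [← mul_assoc, mkAlgHom_ι_zero_mul_self]
  exact neg_one_mul x

theorem mul_mkAlgHom_ι_one_mul_mkAlgHom_ι_one (x : RingQuot (QRel t)) :
    x * mkAlgHom ℝ (QRel t) (ι ℝ 1) * mkAlgHom ℝ (QRel t) (ι ℝ 1) = -x := by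
  rw [mul_assoc, mkAlgHom_ι_one_mul_self]
  exact mul_neg_one x

variable (t) in
/-- `i ↦ i`, `j ↦ j - (t/2) i`: in `ℍ[ℝ, -1, t²/4 - 1]` both images square to `-1`
and their anticommutator is `t`. -/
noncomputable def toQuaternion : RingQuot (QRel t) →ₐ[ℝ] ℍ[ℝ, -1, t^2/4 - 1] :=
  liftAlgHom ℝ ⟨FreeAlgebra.lift ℝ ![⟨0, 1, 0, 0⟩, ⟨0, -(t/2), 1, 0⟩], by
    rintro a b (_ | _ | _) <;> ext <;> simp; ring⟩

variable (t) in
def stdMonomials : Fin 4 → RingQuot (QRel t) :=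
  ![1, mkAlgHom ℝ (QRel t) (ι ℝ 0), mkAlgHom ℝ (QRel t) (ι ℝ 1),
    mkAlgHom ℝ (QRel t) (ι ℝ 0 * ι ℝ 1)]

theorem toQuaternion_comp_stdMonomials :
    toQuaternion t ∘ stdMonomials t = ![1, ⟨0, 1, 0, 0⟩, ⟨0, -(t/2), 1, 0⟩, ⟨t/2, 0, 0, 1⟩] := by
  ext k : 1
  fin_cases k <;> simp [stdMonomials, toQuaternion, QuaternionAlgebra.mk_mul_mk]

theorem linearIndependent_stdMonomials : LinearIndependent ℝ (stdMonomials t) := by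
  refine LinearIndependent.of_comp (toQuaternion t).toLinearMap ?_
  rw [AlgHom.coe_toLinearMap, toQuaternion_comp_stdMonomials, Fintype.linearIndependent_iff]
  intro c hc
  obtain ⟨h_re, h_imI, h_imJ, h_imK⟩ :
      c 0 + c 3 * (t / 2) = 0 ∧ c 1 - c 2 * (t / 2) = 0 ∧ c 2 = 0 ∧ c 3 = 0 := by
    simpa [Fin.sum_univ_four, QuaternionAlgebra.ext_iff, sub_eq_add_neg] using hc
  intro k
  fin_cases k
  · show c 0 = 0
    linear_combination h_re - t / 2 * h_imK
  · show c 1 = 0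
    linear_combination h_imI + t / 2 * h_imJ
  · exact h_imJ
  · exact h_imK

theorem span_stdMonomials : span ℝ (range (stdMonomials t)) = ⊤ := by
  set a := mkAlgHom ℝ (QRel t) (ι ℝ 0)
  set b := mkAlgHom ℝ (QRel t) (ι ℝ 1)
  set M := span ℝ (range (stdMonomials t))
  have mem : ∀ k, stdMonomials t k ∈ M := fun k => subset_span ⟨k, rfl⟩
  have h1 : 1 ∈ M := mem 0
  have ha : a ∈ M := mem 1
  have hb : b ∈ M := mem 2
  have hab : a * b ∈ M := map_mul (mkAlgHom ℝ (QRel t)) _ _ ▸ mem 3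
  refine span_range_eq_top_of_mul_mem (adjoin_range_mkAlgHom_ι _) _ h1 ?_
  rw [forall_mem_range, Fin.forall_fin_two]
  refine ⟨fun k => ?_, fun k => ?_⟩ <;> fin_cases k
  · show a * 1 ∈ M
    rw [mul_one]; exact ha
  · show a * a ∈ M
    rw [mkAlgHom_ι_zero_mul_self]; exact M.neg_mem h1
  · exact hab
  · show a * mkAlgHom ℝ (QRel t) (ι ℝ 0 * ι ℝ 1) ∈ M
    rw [map_mul, mkAlgHom_ι_zero_mul_mkAlgHom_ι_zero_mul]; exact M.neg_mem hb
  · show b * 1 ∈ M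
    rw [mul_one]; exact hb
  · show b * a ∈ M
    rw [mkAlgHom_ι_one_mul_ι_zero]; exact M.sub_mem (M.smul_mem t h1) hab
  · show b * b ∈ M
    rw [mkAlgHom_ι_one_mul_self]; exact M.neg_mem h1
  · show b * mkAlgHom ℝ (QRel t) (ι ℝ 0 * ι ℝ 1) ∈ M
    rw [map_mul, ← mul_assoc, mkAlgHom_ι_one_mul_ι_zero, sub_mul, smul_mul_assoc, one_mul,
      mul_mkAlgHom_ι_one_mul_mkAlgHom_ι_one]
    exact M.sub_mem (M.smul_mem t hb) (M.neg_mem ha)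

end QRel

/-- the images of `1, i, j, i·j` form an `ℝ`-basis of the
deformed quaternions; in particular the algebra is 4-dimensional. -/
theorem deformed_quaternions_basis (t : ℝ) :
    letI π := RingQuot.mkAlgHom ℝ (QRel t)
    letI v : Fin 4 → RingQuot (QRel t) :=
      ![1, π (ι ℝ 0), π (ι ℝ 1), π (ι ℝ 0 * ι ℝ 1)]
    LinearIndependent ℝ v ∧ Submodule.span ℝ (Set.range v) = ⊤ ∧
      Module.finrank ℝ (RingQuot (QRel t)) = 4 := by
  refine ⟨QRel.linearIndependent_stdMonomials, QRel.span_stdMonomials, ?_⟩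
  rw [Module.finrank_eq_card_basis
    (.mk QRel.linearIndependent_stdMonomials QRel.span_stdMonomials.ge), Fintype.card_fin]
end
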